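/- arXiv:1501.01208 — 7 statements merged into one kernel-verified Lean document; each statement's English description precedes it below -/
import Mathlib

section
/- Let (x, y) be real-valued random variables with finite second moments, let λ > 0, a > 2, and assume E[x²] > 1/(a − 1). Set β_LS = E[xy]/E[x²]. Then the minimizer over β ∈ ℝ of g(β) = E[(y − xβ)²] + 2·J_SCAD(β) is: (i) sign(β_LS)·max(|β_LS| − λ/E[x²], 0) if |β_LS| ≤ λ + λ/E[x²]; (ii) ((a − 1)E[x²]·β_LS − aλ·sign(β_LS)) / ((a − 1)E[x²] − 1) if λ + λ/E[x²] < |β_LS| ≤ aλ; (iii) β_LS if |β_LS| > aλ. -/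
open MeasureTheory


noncomputable def JfAux (l a u : ℝ) : ℝ :=
  if u ≤ l then l * u
  else if u ≤ a * l then -(u - a * l) ^ 2 / (2 * (a - 1)) + l ^ 2 * (a + 1) / 2
  else l ^ 2 * (a + 1) / 2

lemma JfAux_low {l a u : ℝ} (h : u ≤ l) : JfAux l a u = l * u := by
  simp [JfAux, h]

lemma JfAux_mid {l a u : ℝ} (h1 : ¬ u ≤ l) (h2 : u ≤ a * l) :
    JfAux l a u = -(u - a * l) ^ 2 / (2 * (a - 1)) + l ^ 2 * (a + 1) / 2 := by
  simp [JfAux, h1, h2]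

lemma JfAux_high {l a u : ℝ} (h1 : ¬ u ≤ l) (h2 : ¬ u ≤ a * l) :
    JfAux l a u = l ^ 2 * (a + 1) / 2 := by
  simp [JfAux, h1, h2]

set_option maxHeartbeats 1000000 in
lemma scad_core (E l a b t s : ℝ) (hl : 0 < l) (ha : 2 < a)
    (hE0 : 0 < E) (hd : 1 < (a - 1) * E) (hb : 0 ≤ b) (ht : 0 ≤ t)
    (hs : s = if b ≤ l + l / E then max (b - l / E) 0
          else if b ≤ a * l then ((a - 1) * E * b - a * l) / ((a - 1) * E - 1) else b) :
    E * (s - b) ^ 2 + 2 * JfAux l a s ≤ E * (t - b) ^ 2 + 2 * JfAux l a t := by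
  have ha1 : (0:ℝ) < a - 1 := by linarith
  have hdd : (0:ℝ) < (a - 1) * E - 1 := by linarith
  set c := l / E with hc
  have hc0 : 0 < c := div_pos hl hE0
  have hcE : E * c = l := by rw [hc]; field_simp
  have h2a : (2 * (a - 1)) ≠ 0 := by positivity
  have m4 : (a - 1) * (E * c) = (a - 1) * l := by rw [hcE]
  have m_t : (a - 1) * t * (E * c) = (a - 1) * t * l := by rw [hcE]
  have m_b : (a - 1) * b * (E * c) = (a - 1) * b * l := by rw [hcE]
  have m_c : (a - 1) * c * (E * c) = (a - 1) * c * l := by rw [hcE]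
  have hc2 : E * c ^ 2 = l * c := by rw [sq, ← mul_assoc, hcE]
  have hc2a : (a - 1) * (E * c ^ 2) = (a - 1) * (l * c) := by rw [hc2]
  by_cases hb1 : b ≤ l + c
  · rw [if_pos hb1] at hs
    by_cases hba : b ≤ c
    · -- B1a : s = 0
      have hs0 : s = 0 := by rw [hs, max_eq_right (by linarith)]
      have hEb : E * b ≤ l := by
        have h := mul_le_mul_of_nonneg_left hba hE0.le
        rwa [hcE] at h
      have hEb1 : (a - 1) * (E * b) ≤ (a - 1) * l := mul_le_mul_of_nonneg_left hEb ha1.le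
      rw [hs0, JfAux_low hl.le, mul_zero]
      rcases le_or_gt t l with htl | htl
      · rw [JfAux_low htl]
        nlinarith [mul_nonneg hE0.le (sq_nonneg t), mul_nonneg ht (sub_nonneg.mpr hEb)]
      · rcases le_or_gt t (a * l) with hta | hta
        · rw [JfAux_mid (not_le.mpr htl) hta]
          generalize hqt : -(t - a * l) ^ 2 / (2 * (a - 1)) = qt
          rw [div_eq_iff h2a] at hqt
          nlinarith [hqt, ha1, hdd, mul_nonneg ht (by linarith : (0:ℝ) ≤ a * l - (a - 1) * (E * b) - l),
            mul_nonneg hdd.le (sq_nonneg t), mul_nonneg hl.le (by linarith : (0:ℝ) ≤ t - l), sq_nonneg l]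
        · rw [JfAux_high (not_le.mpr htl) (not_le.mpr hta)]
          nlinarith [ha1, hdd, mul_nonneg ht (by linarith : (0:ℝ) ≤ a * l - (a - 1) * (E * b) - l),
            mul_nonneg hdd.le (sq_nonneg t), mul_nonneg hl.le (by linarith : (0:ℝ) ≤ t - l),
            sq_nonneg l, sq_nonneg (t - a * l)]
    · -- B1b : s = b - c
      push_neg at hba
      have hs1 : s = b - c := by rw [hs, max_eq_left (by linarith)]
      rw [hs1, JfAux_low (by linarith : b - c ≤ l)]
      have hEcl : (E * c - l) ^ 2 = 0 := by rw [hcE]; ring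
      have mkey : (a - 1) * (t - (b - c)) * (E * c) = (a - 1) * (t - (b - c)) * l := by
        rw [hcE]
      rcases le_or_gt t l with htl | htl
      · rw [JfAux_low htl]
        nlinarith [hEcl, sq_nonneg (E * (t - b) + l), hE0]
      · rcases le_or_gt t (a * l) with hta | hta
        · rw [JfAux_mid (not_le.mpr htl) hta]
          generalize hqt : -(t - a * l) ^ 2 / (2 * (a - 1)) = qt
          rw [div_eq_iff h2a] at hqt
          nlinarith [hqt, ha1, mkey,
            mul_nonneg hdd.le (sq_nonneg (t - (b - c))),
            mul_nonneg (by linarith : (0:ℝ) ≤ l + c - b) (by linarith : (0:ℝ) ≤ t - l),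
            sq_nonneg (l + c - b)]
        · rw [JfAux_high (not_le.mpr htl) (not_le.mpr hta)]
          nlinarith [ha1, mkey,
            mul_nonneg hdd.le (sq_nonneg (t - (b - c))),
            sq_nonneg (t - a * l + (l + c - b)),
            mul_nonneg (mul_nonneg ha1.le hl.le) (by linarith : (0:ℝ) ≤ l + c - b)]
  · rw [if_neg hb1] at hs
    push_neg at hb1
    by_cases hb2 : b ≤ a * l
    · -- B2
      rw [if_pos hb2] at hs
      have hsd : ((a - 1) * E - 1) * s = (a - 1) * E * b - a * l := by
        rw [hs]; field_simp
      have hsgt : l < s := by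
        rw [hs, lt_div_iff₀ hdd]
        nlinarith [mul_pos (mul_pos ha1 hE0) (by linarith : (0:ℝ) < b - (l + c)), m4]
      have hsle : s ≤ a * l := by
        rw [hs, div_le_iff₀ hdd]
        nlinarith [mul_le_mul_of_nonneg_left hb2 (le_of_lt (mul_pos ha1 hE0))]
      rw [JfAux_mid (not_le.mpr hsgt) hsle]
      generalize hqs : -(s - a * l) ^ 2 / (2 * (a - 1)) = qs
      rw [div_eq_iff h2a] at hqs
      have hsd_t : t * (((a - 1) * E - 1) * s) = t * ((a - 1) * E * b - a * l) := by rw [hsd]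
      have hsd_s : s * (((a - 1) * E - 1) * s) = s * ((a - 1) * E * b - a * l) := by rw [hsd]
      rcases le_or_gt t l with htl | htl
      · rw [JfAux_low htl]
        nlinarith [hqs, ha1, hdd, hsd, hsd_t, hsd_s,
          mul_nonneg hdd.le (sq_nonneg (t - s)), sq_nonneg (t - l)]
      · rcases le_or_gt t (a * l) with hta | hta
        · rw [JfAux_mid (not_le.mpr htl) hta]
          generalize hqt : -(t - a * l) ^ 2 / (2 * (a - 1)) = qt
          rw [div_eq_iff h2a] at hqt
          nlinarith [hqs, hqt, ha1, hdd, hsd, hsd_t, hsd_s,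
            mul_nonneg hdd.le (sq_nonneg (t - s))]
        · rw [JfAux_high (not_le.mpr htl) (not_le.mpr hta)]
          nlinarith [hqs, ha1, hdd, hsd, hsd_t, hsd_s,
            mul_nonneg hdd.le (sq_nonneg (t - s)), sq_nonneg (t - a * l)]
    · -- B3 : s = b
      rw [if_neg hb2] at hs
      push_neg at hb2
      rw [hs, JfAux_high (by push_neg; nlinarith : ¬ b ≤ l) (not_le.mpr hb2)]
      rcases le_or_gt t l with htl | htl
      · rw [JfAux_low htl]
        nlinarith [ha1, hdd, mul_nonneg hdd.le (sq_nonneg (t - b)),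
          mul_nonneg (by linarith [mul_pos ha1 hl] : (0:ℝ) ≤ a * l - t) (by linarith : (0:ℝ) ≤ b - a * l),
          sq_nonneg (b - a * l), sq_nonneg (t - l)]
      · rcases le_or_gt t (a * l) with hta | hta
        · rw [JfAux_mid (not_le.mpr htl) hta]
          generalize hqt : -(t - a * l) ^ 2 / (2 * (a - 1)) = qt
          rw [div_eq_iff h2a] at hqt
          nlinarith [hqt, ha1, hdd, mul_nonneg hdd.le (sq_nonneg (t - b)),
            mul_nonneg (by linarith : (0:ℝ) ≤ a * l - t) (by linarith : (0:ℝ) ≤ b - a * l),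
            sq_nonneg (b - a * l)]
        · rw [JfAux_high (not_le.mpr htl) (not_le.mpr hta)]
          nlinarith [sq_nonneg (t - b), hE0]

lemma scad_key_nonneg (E l a : ℝ) (hl : 0 < l) (ha : 2 < a) (hE0 : 0 < E)
    (hd : 1 < (a - 1) * E) (b s : ℝ) (hb : 0 ≤ b)
    (hs : s = if |b| ≤ l + l / E then Real.sign b * max (|b| - l / E) 0
          else if |b| ≤ a * l then ((a - 1) * E * b - a * l * Real.sign b) / ((a - 1) * E - 1)
          else b)
    (β : ℝ) :
    E * (s - b) ^ 2 + 2 * JfAux l a |s| ≤ E * (β - b) ^ 2 + 2 * JfAux l a |β| := by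
  have ha1 : (0:ℝ) < a - 1 := by linarith
  have hdd : (0:ℝ) < (a - 1) * E - 1 := by linarith
  have hc0 : 0 < l / E := div_pos hl hE0
  have hcE : E * (l / E) = l := by field_simp
  have hs' : s = if b ≤ l + l / E then max (b - l / E) 0
      else if b ≤ a * l then ((a - 1) * E * b - a * l) / ((a - 1) * E - 1) else b := by
    rcases hb.lt_or_eq with hb0 | hb0
    · rw [abs_of_pos hb0, Real.sign_of_pos hb0] at hs
      rw [hs]; split_ifs <;> ring
    · rw [← hb0] at hs ⊢
      rw [abs_zero, Real.sign_zero] at hs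
      rw [hs, if_pos (by linarith), if_pos (by linarith), zero_mul,
        max_eq_right (by linarith)]
  have hs0 : 0 ≤ s := by
    rw [hs']
    split_ifs with h1 h2
    · exact le_max_right _ _
    · push_neg at h1
      rw [le_div_iff₀ hdd]
      nlinarith [mul_pos (mul_pos ha1 hE0) (by linarith : (0:ℝ) < b - (l + l / E)),
        (by rw [hcE] : (a - 1) * (E * (l / E)) = (a - 1) * l)]
    · push_neg at h1; linarith
  have hcore := scad_core E l a b |β| s hl ha hE0 hd hb (abs_nonneg β) hs'
  rw [abs_of_nonneg hs0]
  have hP : 0 ≤ E * (b * (|β| - β)) :=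
    mul_nonneg hE0.le (mul_nonneg hb (sub_nonneg.mpr (le_abs_self β)))
  have he : E * |β| ^ 2 = E * β ^ 2 := by rw [sq_abs]
  linarith [hcore, hP, he]

lemma scad_key (E l a : ℝ) (hl : 0 < l) (ha : 2 < a) (hE0 : 0 < E)
    (hd : 1 < (a - 1) * E) (b s : ℝ)
    (hs : s = if |b| ≤ l + l / E then Real.sign b * max (|b| - l / E) 0
          else if |b| ≤ a * l then ((a - 1) * E * b - a * l * Real.sign b) / ((a - 1) * E - 1)
          else b)
    (β : ℝ) :
    E * (s - b) ^ 2 + 2 * JfAux l a |s| ≤ E * (β - b) ^ 2 + 2 * JfAux l a |β| := by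
  rcases le_or_gt 0 b with hb | hb
  · exact scad_key_nonneg E l a hl ha hE0 hd b s hb hs β
  · have hs' : -s = if |(-b)| ≤ l + l / E then Real.sign (-b) * max (|(-b)| - l / E) 0
        else if |(-b)| ≤ a * l then
          ((a - 1) * E * (-b) - a * l * Real.sign (-b)) / ((a - 1) * E - 1)
        else -b := by
      rw [abs_neg, abs_of_neg hb, Real.sign_of_pos (by linarith : (0:ℝ) < -b)]
      rw [abs_of_neg hb, Real.sign_of_neg hb] at hs
      rw [hs]; split_ifs <;> ring
    have h := scad_key_nonneg E l a hl ha hE0 hd (-b) (-s) (by linarith) hs' (-β)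
    rw [abs_neg, abs_neg] at h
    nlinarith [h]

/-- Explicit solution of the SCAD-penalized least squares problem in
simple regression: the minimizer of `g(β) = E[(y - xβ)²] + 2·J_SCAD(β)` is the
soft-thresholded value if `|β_LS| ≤ λ + λ/E[x²]`, the SCAD intermediate formula if
`λ + λ/E[x²] < |β_LS| ≤ aλ`, and `β_LS` itself if `|β_LS| > aλ`. -/
theorem scad_explicit_solution_simple_regression
    {Ω : Type*} [MeasurableSpace Ω] (μ : Measure Ω) [IsProbabilityMeasure μ]
    (x y : Ω → ℝ)
    (hx2 : Integrable (fun ω => (x ω) ^ 2) μ)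
    (hy2 : Integrable (fun ω => (y ω) ^ 2) μ)
    (hxy : Integrable (fun ω => x ω * y ω) μ)
    (lam a : ℝ) (hlam : 0 < lam) (ha : 2 < a)
    (Ex : ℝ) (hEx : Ex = ∫ ω, (x ω) ^ 2 ∂μ) (hExlb : 1 / (a - 1) < Ex)
    (βLS : ℝ) (hβLS : βLS = (∫ ω, x ω * y ω ∂μ) / Ex)
    (J : ℝ → ℝ)
    (hJ : ∀ β : ℝ, J β =
      if |β| ≤ lam then lam * |β|
      else if |β| ≤ a * lam then
        lam * (-(|β| - a * lam) ^ 2 / (2 * (a - 1) * lam) + lam * (a + 1) / 2)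
      else lam ^ 2 * (a + 1) / 2)
    (βscad : ℝ)
    (hβscad : βscad =
      if |βLS| ≤ lam + lam / Ex then Real.sign βLS * max (|βLS| - lam / Ex) 0
      else if |βLS| ≤ a * lam then
        ((a - 1) * Ex * βLS - a * lam * Real.sign βLS) / ((a - 1) * Ex - 1)
      else βLS) :
    ∀ β : ℝ,
      (∫ ω, (y ω - x ω * βscad) ^ 2 ∂μ) + 2 * J βscad ≤
        (∫ ω, (y ω - x ω * β) ^ 2 ∂μ) + 2 * J β := by
  intro β
  have ha1 : (0:ℝ) < a - 1 := by linarith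
  have hEx0 : 0 < Ex := lt_trans (div_pos one_pos ha1) hExlb
  have hd : 1 < (a - 1) * Ex := by
    have := (div_lt_iff₀ ha1).mp hExlb
    linarith
  have hJf : ∀ u : ℝ, J u = JfAux lam a |u| := by
    intro u
    rw [hJ u]
    rcases le_or_gt |u| lam with h1 | h1
    · rw [if_pos h1, JfAux_low h1]
    · rw [if_neg (not_le.mpr h1)]
      rcases le_or_gt |u| (a * lam) with h2 | h2
      · rw [if_pos h2, JfAux_mid (not_le.mpr h1) h2]
        field_simp
      · rw [if_neg (not_le.mpr h2), JfAux_high (not_le.mpr h1) (not_le.mpr h2)]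
  have hexp : ∀ c : ℝ, (∫ ω, (y ω - x ω * c) ^ 2 ∂μ)
      = (∫ ω, (y ω) ^ 2 ∂μ) - 2 * c * (∫ ω, x ω * y ω ∂μ) + c ^ 2 * Ex := by
    intro c
    have h1 : (fun ω => (y ω - x ω * c) ^ 2)
        = fun ω => ((y ω) ^ 2 - (2 * c) * (x ω * y ω)) + c ^ 2 * (x ω) ^ 2 := by
      funext ω; ring
    have i1 : Integrable (fun ω => (y ω) ^ 2 - 2 * c * (x ω * y ω)) μ :=
      hy2.sub (hxy.const_mul (2 * c))
    have i2 : Integrable (fun ω => c ^ 2 * (x ω) ^ 2) μ := hx2.const_mul (c ^ 2)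
    rw [h1, integral_add i1 i2, integral_sub hy2 (hxy.const_mul (2 * c)),
      integral_const_mul, integral_const_mul, hEx]
  have hxyE : (∫ ω, x ω * y ω ∂μ) = Ex * βLS := by
    rw [hβLS]; field_simp
  have hkey := scad_key Ex lam a hlam ha hEx0 hd βLS βscad hβscad β
  rw [hexp βscad, hexp β, hxyE, hJf βscad, hJf β]
  nlinarith [hkey]
end

section
/- Consider the simple regression model y = xβ₀ + e with x and e independent real-valued random variables having finite second moments, E[e] = 0 and E[x²] > 1/(a − 1), where λ > 0 and a > 2. If |β₀| > aλ, then β₀ itself minimizes the SCAD objective g(β) = E[(y − xβ)²] + 2·J_SCAD(β) over β ∈ ℝ; that is, the SCAD functional is unbiased at the model for large parameter values. -/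
open MeasureTheory

/-!
Independence and `E[e] = 0` kill the cross term, so the expected squared loss at `β` is
`(β₀ - β)² E[x²] + E[e²]`. Beyond `aλ` the SCAD penalty is flat at its maximum, while the
penalty saved by moving to `β` is at most `(aλ - |β|)₊² / (2(a - 1))`; since
`|β₀| > aλ` this is at most `(β₀ - β)² / (2(a - 1)) < (β₀ - β)² E[x²] / 2`, which is what
the loss grows by.
-/

noncomputable def scadPenalty (lam a β : ℝ) : ℝ :=
  if |β| ≤ lam then lam * |β|
  else if |β| ≤ a * lam then
    lam * (-(|β| - a * lam) ^ 2 / (2 * (a - 1) * lam) + lam * (a + 1) / 2)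
  else lam ^ 2 * (a + 1) / 2

theorem scadPenalty_of_mul_lt_abs {lam a β : ℝ} (hlam : 0 ≤ lam) (ha : 1 ≤ a)
    (hβ : a * lam < |β|) : scadPenalty lam a β = lam ^ 2 * (a + 1) / 2 := by
  have hle : lam ≤ a * lam := le_mul_of_one_le_left hlam ha
  rw [scadPenalty, if_neg (by linarith), if_neg hβ.not_ge]

theorem sub_scadPenalty_le {lam a : ℝ} (hlam : 0 < lam) (ha : 1 < a) (β : ℝ) :
    lam ^ 2 * (a + 1) / 2 - scadPenalty lam a β ≤ max (a * lam - |β|) 0 ^ 2 / (2 * (a - 1)) := by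
  have ha1 : 0 < a - 1 := by linarith
  rw [le_div_iff₀ (by positivity), scadPenalty]
  split_ifs with h₁ h₂
  · -- the two sides differ by `(|β| - lam)²`
    rw [max_eq_left (by nlinarith)]
    nlinarith [sq_nonneg (|β| - lam)]
  · rw [max_eq_left (by linarith)]
    refine le_of_eq ?_
    field_simp
    ring
  · nlinarith [sq_nonneg (max (a * lam - |β|) 0)]

theorem max_sub_abs_le_abs_sub {c u v : ℝ} (hu : c ≤ |u|) : max (c - |v|) 0 ≤ |u - v| :=
  max_le (by linarith [abs_sub_abs_le_abs_sub u v]) (abs_nonneg _)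

theorem integral_sq_mul_add_of_integral_mul_eq_zero {Ω : Type*} [MeasurableSpace Ω]
    {μ : Measure Ω} {x e : Ω → ℝ} (hx2 : Integrable (fun ω => x ω ^ 2) μ)
    (he2 : Integrable (fun ω => e ω ^ 2) μ) (hxe : Integrable (fun ω => x ω * e ω) μ)
    (hxe0 : ∫ ω, x ω * e ω ∂μ = 0) (b : ℝ) :
    ∫ ω, (x ω * b + e ω) ^ 2 ∂μ = b ^ 2 * ∫ ω, x ω ^ 2 ∂μ + ∫ ω, e ω ^ 2 ∂μ := by
  have hexpand : (fun ω => (x ω * b + e ω) ^ 2)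
      = fun ω => b ^ 2 * x ω ^ 2 + (2 * b * (x ω * e ω) + e ω ^ 2) := by
    funext ω; ring
  have hcross : Integrable (fun ω => 2 * b * (x ω * e ω)) μ := hxe.const_mul _
  have hrest : Integrable (fun ω => 2 * b * (x ω * e ω) + e ω ^ 2) μ := hcross.add he2
  rw [hexpand, integral_add (hx2.const_mul _) hrest, integral_add hcross he2,
    integral_const_mul, integral_const_mul, hxe0, mul_zero, zero_add]

/-- In the simple regression model `y = xβ₀ + e` with `x` and `e`
independent and `E[e] = 0`, if `|β₀| > aλ` then `β₀` itself minimizes the SCAD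
objective `g(β) = E[(y - xβ)²] + 2·J_SCAD(β)`: the SCAD functional is unbiased at
the model for large parameter values. -/
theorem scad_unbiased_for_large_parameters
    {Ω : Type*} [MeasurableSpace Ω] (μ : Measure Ω) [IsProbabilityMeasure μ]
    (x e : Ω → ℝ)
    (hind : ProbabilityTheory.IndepFun x e μ)
    (hx1 : Integrable x μ) (he1 : Integrable e μ)
    (hx2 : Integrable (fun ω => (x ω) ^ 2) μ)
    (he2 : Integrable (fun ω => (e ω) ^ 2) μ)
    (hmean : ∫ ω, e ω ∂μ = 0)
    (lam a : ℝ) (hlam : 0 < lam) (ha : 2 < a)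
    (hEx : 1 / (a - 1) < ∫ ω, (x ω) ^ 2 ∂μ)
    (β₀ : ℝ) (y : Ω → ℝ) (hy : ∀ ω, y ω = x ω * β₀ + e ω)
    (hβ₀ : a * lam < |β₀|)
    (J : ℝ → ℝ)
    (hJ : ∀ β : ℝ, J β =
      if |β| ≤ lam then lam * |β|
      else if |β| ≤ a * lam then
        lam * (-(|β| - a * lam) ^ 2 / (2 * (a - 1) * lam) + lam * (a + 1) / 2)
      else lam ^ 2 * (a + 1) / 2) :
    ∀ β : ℝ,
      (∫ ω, (y ω - x ω * β₀) ^ 2 ∂μ) + 2 * J β₀ ≤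
        (∫ ω, (y ω - x ω * β) ^ 2 ∂μ) + 2 * J β := by
  intro β
  have ha1 : 1 < a := by linarith
  have hJscad : J = scadPenalty lam a := funext hJ
  have hxe0 : ∫ ω, x ω * e ω ∂μ = 0 := by
    rw [hind.integral_fun_mul_eq_mul_integral hx1.1 he1.1, hmean, mul_zero]
  have hloss : ∀ c, ∫ ω, (y ω - x ω * c) ^ 2 ∂μ
      = (β₀ - c) ^ 2 * ∫ ω, x ω ^ 2 ∂μ + ∫ ω, e ω ^ 2 ∂μ := fun c => by
    simp_rw [hy, show ∀ ω, x ω * β₀ + e ω - x ω * c = x ω * (β₀ - c) + e ω from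
      fun ω => by ring]
    exact integral_sq_mul_add_of_integral_mul_eq_zero hx2 he2
      (hind.integrable_mul hx1 he1) hxe0 _
  rw [hloss, hloss, hJscad, scadPenalty_of_mul_lt_abs hlam.le ha1.le hβ₀]
  have hgap := sub_scadPenalty_le hlam ha1 β
  have hdist : max (a * lam - |β|) 0 ^ 2 ≤ (β₀ - β) ^ 2 := by
    rw [← sq_abs (β₀ - β)]
    exact pow_le_pow_left₀ (le_max_right _ _) (max_sub_abs_le_abs_sub hβ₀.le) 2
  have hsave : max (a * lam - |β|) 0 ^ 2 / (a - 1) ≤ (β₀ - β) ^ 2 * ∫ ω, x ω ^ 2 ∂μ := by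
    rw [div_eq_mul_one_div]
    exact mul_le_mul hdist hEx.le (by positivity) (sq_nonneg _)
  rw [sub_self, zero_pow two_ne_zero, zero_mul]
  linarith [show max (a * lam - |β|) 0 ^ 2 / (2 * (a - 1))
    = max (a * lam - |β|) 0 ^ 2 / (a - 1) / 2 by rw [div_div, mul_comm 2]]
end

section
/- Let y = xβ₀ + e with x ~ N(0, Σ) (Σ > 0) and e ~ N(0, σ²) independent, let α ∈ (0, 1) and λ ≥ 0. Let q_α = Φ⁻¹((α + 1)/2), c₁ = α − 2q_α·φ(q_α), where Φ and φ are the standard normal cdf and density. For each β ∈ ℝ let q_β denote the α-quantile of |y − xβ|. Then the sparse LTS objective β ↦ E[(y − xβ)²·1{|y − xβ| ≤ q_β}] + αλ|β| is minimized at β = sign(β₀)·max(|β₀| − αλ/(2c₁Σ), 0). -/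
/-!
For every `β` the residual `y - xβ = (β₀ - β)x + e` is a centred Gaussian with variance
`τ = (β₀ - β)²Σ + σ²`, i.e. the law of `√τ Z` with `Z` standard normal. Multiplying a random
variable by `s ≥ 0` multiplies the `α`-quantile of its absolute value by `s` and the second
moment truncated there by `s²`; hence the trimmed objective is `c₁τ + αλ|β|` with
`c₁ = E[Z²; |Z| ≤ q_α]`, and an integration by parts against `φ' = -uφ` gives
`c₁ = α - 2q_αφ(q_α) > 0`. Up to a constant this is `c₁Σ(β - β₀)² + αλ|β|`, a one-dimensional
lasso problem minimised by soft-thresholding `β₀` at `αλ/(2c₁Σ)`.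
-/

open MeasureTheory ProbabilityTheory Real Set
open scoped NNReal

lemma map_const_mul_add_eq_gaussianReal {Ω : Type*} [MeasurableSpace Ω] {μ : Measure Ω}
    {X E : Ω → ℝ} {m₁ m₂ : ℝ} {v₁ v₂ : ℝ≥0} (hXE : IndepFun X E μ)
    (hX : μ.map X = gaussianReal m₁ v₁) (hE : μ.map E = gaussianReal m₂ v₂) (c : ℝ) :
    μ.map (fun ω => c * X ω + E ω)
      = gaussianReal (c * m₁ + m₂) (⟨c ^ 2, sq_nonneg c⟩ * v₁ + v₂) :=
  gaussianReal_add_gaussianReal_of_indepFun (hXE.comp (measurable_const_mul c) measurable_id)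
    (gaussianReal_const_mul ⟨aemeasurable_of_map_neZero (by rw [hX]; infer_instance), hX⟩ c).map_eq
    hE

noncomputable def absQuantile (ν : Measure ℝ) (α : ℝ) : ℝ :=
  sInf {t : ℝ | ENNReal.ofReal α ≤ ν (Icc (-t) t)}

noncomputable def truncSecondMoment (ν : Measure ℝ) (q : ℝ) : ℝ :=
  ∫ u, if |u| ≤ q then u ^ 2 else 0 ∂ν

/-- The population LTS objective `E[r² 1{|r| ≤ q_α}]` of a residual `r ∼ ν`. -/
noncomputable def trimmedSecondMoment (ν : Measure ℝ) (α : ℝ) : ℝ :=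
  truncSecondMoment ν (absQuantile ν α)

lemma absQuantile_map {Ω : Type*} [MeasurableSpace Ω] {μ : Measure Ω} {R : Ω → ℝ}
    (hR : AEMeasurable R μ) (α : ℝ) :
    absQuantile (μ.map R) α = sInf {t : ℝ | ENNReal.ofReal α ≤ μ {ω | |R ω| ≤ t}} := by
  simp_rw [absQuantile, Measure.map_apply_of_aemeasurable hR measurableSet_Icc, preimage,
    mem_Icc, ← abs_le]

lemma measurable_ite_abs_le_sq (q : ℝ) : Measurable fun u : ℝ => if |u| ≤ q then u ^ 2 else 0 :=
  Measurable.ite (measurableSet_le (by fun_prop) measurable_const) (by fun_prop) measurable_const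

lemma truncSecondMoment_map {Ω : Type*} [MeasurableSpace Ω] {μ : Measure Ω} {R : Ω → ℝ}
    (hR : AEMeasurable R μ) (q : ℝ) :
    truncSecondMoment (μ.map R) q = ∫ ω, if |R ω| ≤ q then R ω ^ 2 else 0 ∂μ :=
  integral_map hR (measurable_ite_abs_le_sq q).aestronglyMeasurable

lemma trimmedSecondMoment_map {Ω : Type*} [MeasurableSpace Ω] {μ : Measure Ω} {R : Ω → ℝ}
    (hR : AEMeasurable R μ) (α : ℝ) :
    trimmedSecondMoment (μ.map R) α = ∫ ω, (if |R ω| ≤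
      sInf {t : ℝ | ENNReal.ofReal α ≤ μ {ω | |R ω| ≤ t}} then R ω ^ 2 else 0) ∂μ := by
  rw [trimmedSecondMoment, absQuantile_map hR, truncSecondMoment_map hR]

lemma absQuantile_eq_of_forall_iff {ν : Measure ℝ} {α q : ℝ}
    (h : ∀ t, ENNReal.ofReal α ≤ ν (Icc (-t) t) ↔ q ≤ t) : absQuantile ν α = q := by
  simp_rw [absQuantile, h]
  exact csInf_Ici

lemma ofReal_le_map_const_mul_Icc_iff {ν : Measure ℝ} {α q s : ℝ} (hq : 0 ≤ q) (hs : 0 ≤ s)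
    (h : ∀ t, ENNReal.ofReal α ≤ ν (Icc (-t) t) ↔ q ≤ t) (t : ℝ) :
    ENNReal.ofReal α ≤ ν.map (s * ·) (Icc (-t) t) ↔ s * q ≤ t := by
  have hpre : (s * ·) ⁻¹' Icc (-t) t = {u | s * |u| ≤ t} := by
    ext u; simp [← abs_le, abs_mul, abs_of_nonneg hs]
  rw [Measure.map_apply (measurable_const_mul s) measurableSet_Icc, hpre]
  constructor
  · intro hα
    by_contra! hlt
    obtain ⟨t', ht'q, hsub⟩ : ∃ t' < q, {u | s * |u| ≤ t} ⊆ Icc (-t') t' := by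
      rcases hs.eq_or_lt with rfl | hs
      · refine ⟨t, by linarith, fun u hu => ?_⟩
        simp only [zero_mul, mem_ofPred_eq] at hu hlt
        linarith
      · refine ⟨t / s, by rwa [div_lt_iff₀' hs], fun u hu => ?_⟩
        rw [mem_Icc, ← abs_le, le_div_iff₀' hs]
        exact hu
    exact ht'q.not_ge ((h t').1 (hα.trans (measure_mono hsub)))
  · intro hsq
    refine ((h q).2 le_rfl).trans (measure_mono fun u hu => ?_)
    rw [mem_Icc, ← abs_le] at hu
    exact (mul_le_mul_of_nonneg_left hu hs).trans hsq

lemma absQuantile_map_const_mul {ν : Measure ℝ} {α q s : ℝ} (hq : 0 ≤ q) (hs : 0 ≤ s)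
    (h : ∀ t, ENNReal.ofReal α ≤ ν (Icc (-t) t) ↔ q ≤ t) :
    absQuantile (ν.map (s * ·)) α = s * q :=
  absQuantile_eq_of_forall_iff (ofReal_le_map_const_mul_Icc_iff hq hs h)

lemma truncSecondMoment_map_const_mul (ν : Measure ℝ) {s : ℝ} (hs : 0 ≤ s) (q : ℝ) :
    truncSecondMoment (ν.map (s * ·)) (s * q) = s ^ 2 * truncSecondMoment ν q := by
  rw [truncSecondMoment_map (measurable_const_mul s).aemeasurable, truncSecondMoment,
    ← integral_const_mul]
  congr 1 with u
  rw [abs_mul, abs_of_nonneg hs]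
  rcases hs.eq_or_lt with rfl | hs
  · simp
  · simp only [mul_le_mul_iff_right₀ hs, mul_ite, mul_zero, mul_pow]

lemma gaussianReal_Iio_neg (v : ℝ≥0) (t : ℝ) :
    gaussianReal 0 v (Iio (-t)) = gaussianReal 0 v (Ioi t) := by
  conv_lhs => rw [← neg_zero, ← gaussianReal_map_neg,
    Measure.map_apply measurable_neg measurableSet_Iio]
  congr 1 with u
  simp

lemma measureReal_gaussianReal_Icc_neg (v : ℝ≥0) {t : ℝ} (ht : 0 ≤ t) :
    (gaussianReal 0 v).real (Icc (-t) t) = 2 * (gaussianReal 0 v).real (Iic t) - 1 := by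
  have hsplit : (gaussianReal 0 v).real (Iic t)
      = (gaussianReal 0 v).real (Iio (-t)) + (gaussianReal 0 v).real (Icc (-t) t) := by
    rw [← measureReal_union ((Iio_disjoint_Ici le_rfl).mono_right Icc_subset_Ici_self)
      measurableSet_Icc, Iio_union_Icc_eq_Iic (by linarith)]
  have htail : (gaussianReal 0 v).real (Iio (-t)) = 1 - (gaussianReal 0 v).real (Iic t) := by
    rw [measureReal_def, gaussianReal_Iio_neg, ← compl_Iic, ← measureReal_def,
      probReal_compl_eq_one_sub measurableSet_Iic]
  linarith

lemma strictMono_measureReal_gaussianReal_Iic (μ : ℝ) {v : ℝ≥0} (hv : v ≠ 0) :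
    StrictMono fun t => (gaussianReal μ v).real (Iic t) := by
  intro a b hab
  have hpos : 0 < (gaussianReal μ v).real (Ioc a b) := by
    refine ENNReal.toReal_pos (fun h0 => ?_) (measure_ne_top _ _)
    simpa [hab.not_ge] using gaussianReal_absolutelyContinuous' μ hv h0
  dsimp only
  rw [← Iic_union_Ioc_eq_Iic hab.le, measureReal_union (Iic_disjoint_Ioc le_rfl) measurableSet_Ioc]
  linarith

section GaussianAbsQuantile

variable {v : ℝ≥0} {α q : ℝ}

lemma le_measureReal_gaussianReal_Icc_iff (hv : v ≠ 0)
    (hq : (gaussianReal 0 v).real (Iic q) = (α + 1) / 2) {t : ℝ} (ht : 0 ≤ t) :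
    α ≤ (gaussianReal 0 v).real (Icc (-t) t) ↔ q ≤ t := by
  rw [measureReal_gaussianReal_Icc_neg v ht,
    ← (strictMono_measureReal_gaussianReal_Iic 0 hv).le_iff_le (a := q), hq]
  constructor <;> intro h <;> linarith

lemma pos_of_measureReal_gaussianReal_Iic_eq (hv : v ≠ 0) (hα : 0 < α)
    (hq : (gaussianReal 0 v).real (Iic q) = (α + 1) / 2) : 0 < q := by
  have := nullSingletonClass_gaussianReal (μ := 0) hv
  by_contra! hq0
  have := (le_measureReal_gaussianReal_Icc_iff hv hq le_rfl).2 hq0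
  simp only [neg_zero, Icc_self, measureReal_def, measure_singleton, ENNReal.toReal_zero] at this
  linarith

lemma ofReal_le_gaussianReal_Icc_iff (hv : v ≠ 0) (hα : 0 < α)
    (hq : (gaussianReal 0 v).real (Iic q) = (α + 1) / 2) (t : ℝ) :
    ENNReal.ofReal α ≤ gaussianReal 0 v (Icc (-t) t) ↔ q ≤ t := by
  rcases lt_or_ge t 0 with ht | ht
  · have hq0 := pos_of_measureReal_gaussianReal_Iic_eq hv hα hq
    simp [Icc_eq_empty (show ¬-t ≤ t by linarith), hα.not_ge, (by linarith : t < q).not_ge]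
  · rw [ENNReal.ofReal_le_iff_le_toReal (measure_ne_top _ _)]
    exact le_measureReal_gaussianReal_Icc_iff hv hq ht

end GaussianAbsQuantile

lemma gaussianReal_map_sqrt_mul (v : ℝ≥0) :
    (gaussianReal 0 1).map (√v * ·) = gaussianReal 0 v := by
  rw [gaussianReal_map_const_mul, mul_zero, mul_one]
  congr 1
  ext
  simp

lemma trimmedSecondMoment_gaussianReal {α q : ℝ} (hα : 0 < α)
    (hq : (gaussianReal 0 1).real (Iic q) = (α + 1) / 2) (τ : ℝ≥0) :
    trimmedSecondMoment (gaussianReal 0 τ) α = τ * truncSecondMoment (gaussianReal 0 1) q := by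
  rw [trimmedSecondMoment, ← gaussianReal_map_sqrt_mul τ,
    absQuantile_map_const_mul (pos_of_measureReal_gaussianReal_Iic_eq one_ne_zero hα hq).le
      (sqrt_nonneg _) (ofReal_le_gaussianReal_Icc_iff one_ne_zero hα hq),
    truncSecondMoment_map_const_mul _ (sqrt_nonneg _), sq_sqrt τ.coe_nonneg]

lemma hasDerivAt_gaussianPDFReal (μ : ℝ) (v : ℝ≥0) (x : ℝ) :
    HasDerivAt (gaussianPDFReal μ v) (-((x - μ) / v) * gaussianPDFReal μ v x) x := by
  have hsq : HasDerivAt (fun x => (x - μ) ^ 2) (2 * (x - μ)) x := by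
    simpa using ((hasDerivAt_id x).sub_const μ).fun_pow 2
  have hexp : HasDerivAt (fun x => -(x - μ) ^ 2 / (2 * v)) (-((x - μ) / v)) x :=
    (hsq.fun_neg.div_const _).congr_deriv (by ring)
  rw [gaussianPDFReal_def]
  exact (hexp.exp.const_mul _).congr_deriv (by ring)

lemma continuous_gaussianPDFReal (μ : ℝ) (v : ℝ≥0) : Continuous (gaussianPDFReal μ v) :=
  continuous_iff_continuousAt.2 fun x => (hasDerivAt_gaussianPDFReal μ v x).continuousAt

lemma integral_indicator_Icc_gaussianReal (μ : ℝ) {v : ℝ≥0} (hv : v ≠ 0) {a b : ℝ} (hab : a ≤ b)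
    (f : ℝ → ℝ) :
    ∫ u, (Icc a b).indicator f u ∂gaussianReal μ v = ∫ u in a..b, gaussianPDFReal μ v u * f u := by
  rw [integral_gaussianReal_eq_integral_smul hv, intervalIntegral.integral_of_le hab,
    ← integral_Icc_eq_integral_Ioc, ← integral_indicator measurableSet_Icc]
  congr 1 with u
  by_cases hu : u ∈ Icc a b <;> simp [hu]

lemma truncSecondMoment_gaussianReal (μ : ℝ) {v : ℝ≥0} (hv : v ≠ 0) {b : ℝ} (hb : 0 ≤ b) :
    truncSecondMoment (gaussianReal μ v) b = ∫ u in -b..b, gaussianPDFReal μ v u * u ^ 2 := by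
  rw [← integral_indicator_Icc_gaussianReal μ hv (by linarith), truncSecondMoment]
  congr 1 with u
  by_cases hu : |u| ≤ b <;> simp [hu, Set.indicator, ← abs_le]

lemma truncSecondMoment_gaussianReal_pos (μ : ℝ) {v : ℝ≥0} (hv : v ≠ 0) {b : ℝ} (hb : 0 < b) :
    0 < truncSecondMoment (gaussianReal μ v) b := by
  rw [truncSecondMoment_gaussianReal μ hv hb.le]
  have hφ := continuous_gaussianPDFReal μ v
  refine intervalIntegral.integral_pos (by linarith) (by fun_prop)
    (fun u _ => mul_nonneg (gaussianPDFReal_nonneg μ v u) (sq_nonneg u))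
    ⟨b, right_mem_Icc.2 (by linarith), by have := gaussianPDFReal_pos μ v b hv; positivity⟩

lemma truncSecondMoment_gaussianReal_zero_mean {v : ℝ≥0} (hv : v ≠ 0) {b : ℝ} (hb : 0 ≤ b) :
    truncSecondMoment (gaussianReal 0 v) b
      = v * ((gaussianReal 0 v).real (Icc (-b) b) - 2 * b * gaussianPDFReal 0 v b) := by
  have hφ := continuous_gaussianPDFReal 0 v
  have hpdf_neg : gaussianPDFReal 0 v (-b) = gaussianPDFReal 0 v b := by
    simp [gaussianPDFReal_def]
  -- integrate `u * (u φ(u))` by parts, `u φ(u)` being the derivative of `-v φ(u)`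
  have hparts := intervalIntegral.integral_mul_deriv_eq_deriv_mul (a := -b) (b := b)
    (u := id) (u' := fun _ => 1) (v := fun u => -(v * gaussianPDFReal 0 v u))
    (v' := fun u => u * gaussianPDFReal 0 v u)
    (fun u _ => hasDerivAt_id u)
    (fun u _ => ((hasDerivAt_gaussianPDFReal 0 v u).const_mul (v : ℝ)).fun_neg.congr_deriv
      (by field_simp; ring))
    intervalIntegrable_const
    ((by fun_prop : Continuous fun u => u * gaussianPDFReal 0 v u).intervalIntegrable _ _)
  have hmass : (gaussianReal 0 v).real (Icc (-b) b) = ∫ u in -b..b, gaussianPDFReal 0 v u := by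
    rw [← integral_indicator_one measurableSet_Icc,
      integral_indicator_Icc_gaussianReal 0 hv (by linarith)]
    simp
  rw [truncSecondMoment_gaussianReal 0 hv hb, hmass]
  simp only [id, intervalIntegral.integral_neg, intervalIntegral.integral_const_mul, hpdf_neg,
    one_mul] at hparts
  rw [show (fun u => gaussianPDFReal 0 v u * u ^ 2) = fun u => u * (u * gaussianPDFReal 0 v u) by
    ext u; ring, hparts]
  ring

-- `hd` and `hdm` say that `b - m ∈ t • ∂|·|(m)`.
lemma sq_sub_add_two_mul_abs_le_of_subgradient {t b m : ℝ} (hd : |b - m| ≤ t)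
    (hdm : (b - m) * m = t * |m|) (β : ℝ) :
    (m - b) ^ 2 + 2 * t * |m| ≤ (β - b) ^ 2 + 2 * t * |β| := by
  have : (b - m) * β ≤ t * |β| :=
    (le_abs_self _).trans ((abs_mul _ _).trans_le (mul_le_mul_of_nonneg_right hd (abs_nonneg β)))
  nlinarith [sq_nonneg (β - m)]

noncomputable def softThreshold (t b : ℝ) : ℝ := Real.sign b * max (|b| - t) 0

lemma softThreshold_of_abs_le {t b : ℝ} (h : |b| ≤ t) : softThreshold t b = 0 := by
  simp [softThreshold, h]

lemma softThreshold_of_lt {t b : ℝ} (ht : 0 ≤ t) (h : t < b) : softThreshold t b = b - t := by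
  rw [softThreshold, Real.sign_of_pos (by linarith), abs_of_pos (by linarith),
    max_eq_left (by linarith), one_mul]

lemma softThreshold_of_lt_neg {t b : ℝ} (ht : 0 ≤ t) (h : b < -t) :
    softThreshold t b = b + t := by
  rw [softThreshold, Real.sign_of_neg (by linarith), abs_of_neg (by linarith),
    max_eq_left (by linarith)]
  ring

lemma softThreshold_subgradient {t : ℝ} (ht : 0 ≤ t) (b : ℝ) :
    |b - softThreshold t b| ≤ t ∧ (b - softThreshold t b) * softThreshold t b
      = t * |softThreshold t b| := by
  rcases le_or_gt |b| t with h | h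
  · simp [softThreshold_of_abs_le h, h]
  rcases lt_abs.1 h with hb | hb
  · rw [softThreshold_of_lt ht hb, sub_sub_cancel, abs_of_nonneg ht, abs_of_pos (by linarith)]
    exact ⟨le_rfl, rfl⟩
  · rw [softThreshold_of_lt_neg ht (by linarith), abs_of_neg (by linarith : b + t < 0)]
    constructor
    · simp [abs_of_nonneg ht]
    · ring

lemma mul_sq_sub_add_mul_abs_softThreshold_le {a c : ℝ} (ha : 0 < a) (hc : 0 ≤ c) (b β : ℝ) :
    a * (softThreshold (c / (2 * a)) b - b) ^ 2 + c * |softThreshold (c / (2 * a)) b|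
      ≤ a * (β - b) ^ 2 + c * |β| := by
  obtain ⟨hd, hdm⟩ := softThreshold_subgradient (by positivity : 0 ≤ c / (2 * a)) b
  have hmin := mul_le_mul_of_nonneg_left (sq_sub_add_two_mul_abs_le_of_subgradient hd hdm β) ha.le
  have hc' : a * (2 * (c / (2 * a))) = c := by field_simp
  linear_combination hmin + (|β| - |softThreshold (c / (2 * a)) b|) * hc'

theorem sparse_LTS_explicit_solution_general
    {Ω : Type*} [MeasurableSpace Ω] (μ : Measure Ω) [IsProbabilityMeasure μ]
    (x e : Ω → ℝ)
    (V σ2 : ℝ≥0) (hV : 0 < V)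
    (hx : μ.map x = gaussianReal 0 V) (he : μ.map e = gaussianReal 0 σ2)
    (hind : IndepFun x e μ)
    (β₀ : ℝ) (y : Ω → ℝ) (hy : ∀ ω, y ω = x ω * β₀ + e ω)
    (α lam : ℝ) (hα : α ∈ Set.Ioo (0 : ℝ) 1) (hlam : 0 ≤ lam)
    (qα : ℝ) (hqα : ((gaussianReal 0 1) (Set.Iic qα)).toReal = (α + 1) / 2)
    (c₁ : ℝ) (hc₁ : c₁ = α - 2 * qα * gaussianPDFReal 0 1 qα)
    (q : ℝ → ℝ)
    (hq : ∀ β : ℝ, q β = sInf {t : ℝ | ENNReal.ofReal α ≤ μ {ω | |y ω - x ω * β| ≤ t}})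
    (f : ℝ → ℝ)
    (hf : ∀ β : ℝ, f β =
      (∫ ω, (if |y ω - x ω * β| ≤ q β then (y ω - x ω * β) ^ 2 else 0) ∂μ)
        + α * lam * |β|) :
    ∀ β : ℝ, f (Real.sign β₀ * max (|β₀| - α * lam / (2 * c₁ * (V : ℝ))) 0) ≤ f β := by
  have hα0 : 0 < α := hα.1
  have hqα0 := pos_of_measureReal_gaussianReal_Iic_eq one_ne_zero hα0 hqα
  have hc₁_eq : c₁ = truncSecondMoment (gaussianReal 0 1) qα := by
    rw [truncSecondMoment_gaussianReal_zero_mean one_ne_zero hqα0.le,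
      measureReal_gaussianReal_Icc_neg 1 hqα0.le, measureReal_def, hqα, hc₁]
    push_cast
    ring
  have hc₁V : 0 < c₁ * V :=
    mul_pos (hc₁_eq ▸ truncSecondMoment_gaussianReal_pos 0 one_ne_zero hqα0) (by exact_mod_cast hV)
  have hf_eq : ∀ β, f β = c₁ * ((β₀ - β) ^ 2 * V + σ2) + α * lam * |β| := by
    intro β
    have hres : (fun ω => y ω - x ω * β) = fun ω => (β₀ - β) * x ω + e ω :=
      funext fun ω => by rw [hy]; ring
    have hlaw := map_const_mul_add_eq_gaussianReal hind hx he (β₀ - β)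
    rw [mul_zero, add_zero] at hlaw
    have hR : AEMeasurable (fun ω => y ω - x ω * β) μ :=
      aemeasurable_of_map_neZero (by rw [hres, hlaw]; infer_instance)
    rw [hf, hq, ← trimmedSecondMoment_map hR, hres, hlaw,
      trimmedSecondMoment_gaussianReal hα0 hqα, ← hc₁_eq]
    show ((β₀ - β) ^ 2 * V + σ2 : ℝ) * c₁ + _ = _
    ring
  intro β
  have hmin := mul_sq_sub_add_mul_abs_softThreshold_le hc₁V (mul_nonneg hα0.le hlam) β₀ β
  rw [softThreshold] at hmin
  rw [mul_assoc 2 c₁, hf_eq, hf_eq]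
  linear_combination hmin

/-- Lemma 1 of the paper: explicit solution of the sparse LTS functional
in simple regression with normal predictor and error: the sparse LTS objective
`β ↦ E[(y - xβ)²·1{|y - xβ| ≤ q_β}] + αλ|β|` (with `q_β` the α-quantile of `|y - xβ|`)
is minimized at `β = sign(β₀)·max(|β₀| - αλ/(2c₁Σ), 0)`. -/
theorem sparse_LTS_explicit_solution
    {Ω : Type*} [MeasurableSpace Ω] (μ : Measure Ω) [IsProbabilityMeasure μ]
    (x e : Ω → ℝ) (hxm : Measurable x) (hem : Measurable e)
    (V σ2 : ℝ≥0) (hV : 0 < V)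
    (hx : μ.map x = gaussianReal 0 V) (he : μ.map e = gaussianReal 0 σ2)
    (hind : IndepFun x e μ)
    (β₀ : ℝ) (y : Ω → ℝ) (hy : ∀ ω, y ω = x ω * β₀ + e ω)
    (α lam : ℝ) (hα : α ∈ Set.Ioo (0 : ℝ) 1) (hlam : 0 ≤ lam)
    (qα : ℝ) (hqα : ((gaussianReal 0 1) (Set.Iic qα)).toReal = (α + 1) / 2)
    (c₁ : ℝ) (hc₁ : c₁ = α - 2 * qα * gaussianPDFReal 0 1 qα)
    (q : ℝ → ℝ)
    (hq : ∀ β : ℝ, q β = sInf {t : ℝ | ENNReal.ofReal α ≤ μ {ω | |y ω - x ω * β| ≤ t}})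
    (f : ℝ → ℝ)
    (hf : ∀ β : ℝ, f β =
      (∫ ω, (if |y ω - x ω * β| ≤ q β then (y ω - x ω * β) ^ 2 else 0) ∂μ)
        + α * lam * |β|) :
    ∀ β : ℝ, f (Real.sign β₀ * max (|β₀| - α * lam / (2 * c₁ * (V : ℝ))) 0) ≤ f β :=
  sparse_LTS_explicit_solution_general μ x e V σ2 hV hx he hind β₀ y hy α lam hα hlam qα hqα c₁ hc₁
    q hq f hf
end

section
/- Let ρ, J : ℝ → ℝ be twice differentiable with ψ = ρ′, let H₀ be the distribution of (x, y) ∈ ℝᵖ × ℝ, fix (x₀, y₀) ∈ ℝᵖ × ℝ, and for ε ∈ [0, δ) let H_ε = (1 − ε)H₀ + ε·δ_{(x₀,y₀)}. Suppose b : [0, δ) → ℝᵖ is differentiable at 0 (from the right) and satisfies for every ε the first-order condition (1 − ε)·E_{H₀}[ψ(y − x′b(ε))x] + ε·ψ(y₀ − x₀′b(ε))x₀ = 2λ·J′(b(ε)) (componentwise), where λ ≥ 0. Assume further that the map β ↦ E_{H₀}[ψ(y − x′β)x] is differentiable at b(0) with derivative −E_{H₀}[ψ′(y − x′b(0))xx′],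 that ψ is continuous, and that the matrix M = E_{H₀}[ψ′(y − x′b(0))xx′] + 2λ·diag(J″(b(0))) is invertible. Then b′(0) = M⁻¹·(ψ(y₀ − x₀′b(0))·x₀ − E_{H₀}[ψ(y − x′b(0))x]). -/
/-!
Differentiate the first-order condition at `ε = 0` from the right. The point-mass term
`ε • ψ(y₀ - x₀'b(ε)) x₀` has derivative `ψ(y₀ - x₀'b(0)) x₀` by continuity of `ψ`, the
mixture term `(1 - ε) • E[ψ(y - x'b(ε)) x]` has derivative `-A b'(0) - E[ψ(y - x'b(0)) x]` by
the chain rule, and the penalty side has derivative `2λ diag(J''(b(0))) b'(0)`. One-sided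
derivatives on `[0, δ)` are unique, so these agree, i.e. `M b'(0) = ψ(y₀ - x₀'b(0)) x₀ -
E[ψ(y - x'b(0)) x]`, and `M` is invertible.
-/

open MeasureTheory Matrix Filter Topology Set

section Calculus

variable {𝕜 : Type*} [NontriviallyNormedField 𝕜] {F : Type*} [NormedAddCommGroup F]
  [NormedSpace 𝕜 F] {s : Set 𝕜} {x : 𝕜}

theorem HasDerivWithinAt.eq_of_eventuallyEq {f g : 𝕜 → F} {f' g' : F}
    (hf : HasDerivWithinAt f f' s x) (hg : HasDerivWithinAt g g' s x)
    (hs : UniqueDiffWithinAt 𝕜 s x) (hx : x ∈ s) (hfg : f =ᶠ[𝓝[s] x] g) : f' = g' :=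
  hs.eq_deriv s hf (hg.congr_of_eventuallyEq_of_mem hfg hx)

theorem hasDerivWithinAt_sub_smul_of_continuousWithinAt {v : 𝕜 → F}
    (hv : ContinuousWithinAt v s x) : HasDerivWithinAt (fun y => (y - x) • v y) (v x) s x := by
  rw [hasDerivWithinAt_iff_tendsto_slope]
  refine (hv.mono sdiff_subset).tendsto.congr' ?_
  filter_upwards [self_mem_nhdsWithin] with y hy
  rw [slope_def_module, sub_self, zero_smul, sub_zero, inv_smul_smul₀ (sub_ne_zero.2 hy.2)]

theorem hasDerivWithinAt_one_sub_smul_add_smul {E : Type*} [NormedAddCommGroup E]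
    [NormedSpace 𝕜 E] {G g : E → F} {G' : E →L[𝕜] F} {b : 𝕜 → E} {D : E}
    (hG : HasFDerivAt G G' (b 0)) (hg : ContinuousAt g (b 0)) (hb : HasDerivWithinAt b D s 0) :
    HasDerivWithinAt (fun ε => (1 - ε) • G (b ε) + ε • g (b ε)) (G' D - G (b 0) + g (b 0)) s 0 := by
  have hmix : HasDerivWithinAt (fun ε => (1 - ε) • G (b ε)) (G' D - G (b 0)) s 0 := by
    simpa [sub_eq_add_neg, add_comm] using
      ((hasDerivWithinAt_id 0 s).const_sub 1).fun_smul (hG.comp_hasDerivWithinAt 0 hb)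
  have hpoint : HasDerivWithinAt (fun ε => ε • g (b ε)) (g (b 0)) s 0 := by
    simpa using hasDerivWithinAt_sub_smul_of_continuousWithinAt
      (hg.comp_continuousWithinAt hb.continuousWithinAt)
  exact hmix.add hpoint

theorem HasDerivWithinAt.coordinatewise_comp {ι : Type*} [Fintype ι] [DecidableEq ι]
    {g g' : 𝕜 → 𝕜} {b : 𝕜 → ι → 𝕜} {D : ι → 𝕜} (hb : HasDerivWithinAt b D s x)
    (hg : ∀ i, HasDerivAt g (g' (b x i)) (b x i)) :
    HasDerivWithinAt (fun ε i => g (b ε i)) (diagonal (fun i => g' (b x i)) *ᵥ D) s x :=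
  hasDerivWithinAt_pi.2 fun i => by
    rw [mulVec_diagonal]
    exact (hg i).comp_hasDerivWithinAt x (hasDerivWithinAt_pi.1 hb i)

end Calculus

theorem influence_function_penalized_M_functional_general
    {p : ℕ} (H₀ : Measure ((Fin p → ℝ) × ℝ))
    (ψ J' J'' : ℝ → ℝ)
    (hJ' : ∀ t : ℝ, HasDerivAt J' (J'' t) t)
    (hψc : Continuous ψ)
    (lam : ℝ)
    (x₀ : Fin p → ℝ) (y₀ : ℝ) (δ : ℝ) (hδ : 0 < δ)
    (b : ℝ → (Fin p → ℝ)) (D : Fin p → ℝ)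
    (hb : HasDerivWithinAt b D (Set.Ici 0) 0)
    (hFOC : ∀ ε ∈ Set.Ico (0 : ℝ) δ, ∀ i : Fin p,
      (1 - ε) * (∫ z, ψ (z.2 - z.1 ⬝ᵥ b ε) * z.1 i ∂H₀)
          + ε * (ψ (y₀ - x₀ ⬝ᵥ b ε) * x₀ i)
        = 2 * lam * J' (b ε i))
    (A : Matrix (Fin p) (Fin p) ℝ)
    (hG : HasFDerivAt
      (fun β : Fin p → ℝ => fun i : Fin p => ∫ z, ψ (z.2 - z.1 ⬝ᵥ β) * z.1 i ∂H₀)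
      (LinearMap.toContinuousLinearMap (Matrix.toLin' (-A))) (b 0))
    (M : Matrix (Fin p) (Fin p) ℝ)
    (hM : M = A + (2 * lam) • Matrix.diagonal (fun i => J'' (b 0 i)))
    (hMinv : IsUnit M.det) :
    D = M⁻¹.mulVec
      (fun i => ψ (y₀ - x₀ ⬝ᵥ b 0) * x₀ i - ∫ z, ψ (z.2 - z.1 ⬝ᵥ b 0) * z.1 i ∂H₀) := by
  set G : (Fin p → ℝ) → (Fin p → ℝ) := fun β i => ∫ z, ψ (z.2 - z.1 ⬝ᵥ β) * z.1 i ∂H₀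
  set g : (Fin p → ℝ) → (Fin p → ℝ) := fun β => ψ (y₀ - x₀ ⬝ᵥ β) • x₀
  have hFOC_near_zero : (fun ε => (1 - ε) • G (b ε) + ε • g (b ε))
      =ᶠ[𝓝[Ici 0] 0] fun ε => (2 * lam) • fun i => J' (b ε i) := by
    filter_upwards [Ico_mem_nhdsGE hδ] with ε hε
    funext i
    simpa [G, g, mul_left_comm] using hFOC ε hε i
  have hlhs := hasDerivWithinAt_one_sub_smul_add_smul hG (g := g) (by fun_prop) hb
  have hrhs := (hb.coordinatewise_comp fun i => hJ' (b 0 i)).const_smul (2 * lam)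
  have hderiv := hlhs.eq_of_eventuallyEq hrhs (uniqueDiffOn_Ici 0 0 self_mem_Ici)
    self_mem_Ici hFOC_near_zero
  have hsys : M *ᵥ D = g (b 0) - G (b 0) := by
    rw [hM, add_mulVec, smul_mulVec, ← hderiv]
    simp only [map_neg, _root_.neg_apply, LinearMap.coe_toContinuousLinearMap', toLin'_apply]
    abel
  calc D = M⁻¹ *ᵥ (M *ᵥ D) := by rw [mulVec_mulVec, nonsing_inv_mul M hMinv, one_mulVec]
    _ = _ := by rw [hsys]; rfl

/-- Proposition 1 of the paper: the influence function of the penalized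
M-functional. If `b(ε)` solves the first-order condition of the penalized M-estimation
problem under the contaminated distribution `(1-ε)H₀ + ε·δ_{(x₀,y₀)}` and is right
differentiable at `0`, then its derivative at `0` equals
`M⁻¹·(ψ(y₀ - x₀'b(0))x₀ - E_{H₀}[ψ(y - x'b(0))x])` with
`M = E_{H₀}[ψ'(y - x'b(0))xx'] + 2λ·diag(J''(b(0)))`. -/
theorem influence_function_penalized_M_functional
    {p : ℕ} (H₀ : Measure ((Fin p → ℝ) × ℝ)) [IsProbabilityMeasure H₀]
    (ρ ψ ψ' J J' J'' : ℝ → ℝ)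
    (hρ : ∀ t : ℝ, HasDerivAt ρ (ψ t) t)
    (hψ : ∀ t : ℝ, HasDerivAt ψ (ψ' t) t)
    (hJ : ∀ t : ℝ, HasDerivAt J (J' t) t)
    (hJ' : ∀ t : ℝ, HasDerivAt J' (J'' t) t)
    (hψc : Continuous ψ)
    (lam : ℝ) (hlam : 0 ≤ lam)
    (x₀ : Fin p → ℝ) (y₀ : ℝ) (δ : ℝ) (hδ : 0 < δ)
    (b : ℝ → (Fin p → ℝ)) (D : Fin p → ℝ)
    (hb : HasDerivWithinAt b D (Set.Ici 0) 0)
    (hFOC : ∀ ε ∈ Set.Ico (0 : ℝ) δ, ∀ i : Fin p,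
      (1 - ε) * (∫ z, ψ (z.2 - z.1 ⬝ᵥ b ε) * z.1 i ∂H₀)
          + ε * (ψ (y₀ - x₀ ⬝ᵥ b ε) * x₀ i)
        = 2 * lam * J' (b ε i))
    (A : Matrix (Fin p) (Fin p) ℝ)
    (hA : ∀ i j : Fin p, A i j = ∫ z, ψ' (z.2 - z.1 ⬝ᵥ b 0) * z.1 i * z.1 j ∂H₀)
    (hG : HasFDerivAt
      (fun β : Fin p → ℝ => fun i : Fin p => ∫ z, ψ (z.2 - z.1 ⬝ᵥ β) * z.1 i ∂H₀)
      (LinearMap.toContinuousLinearMap (Matrix.toLin' (-A))) (b 0))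
    (M : Matrix (Fin p) (Fin p) ℝ)
    (hM : M = A + (2 * lam) • Matrix.diagonal (fun i => J'' (b 0 i)))
    (hMinv : IsUnit M.det) :
    D = M⁻¹.mulVec
      (fun i => ψ (y₀ - x₀ ⬝ᵥ b 0) * x₀ i - ∫ z, ψ (z.2 - z.1 ⬝ᵥ b 0) * z.1 i ∂H₀) :=
  influence_function_penalized_M_functional_general H₀ ψ J' J'' hJ' hψc lam x₀ y₀ δ hδ b D hb hFOC A
    hG M hM hMinv
end

section
/- Let y = x′β₀ + e with x a random vector in ℝᵖ, e a real random variable independent of x with E[e] = 0, all with finite second moments; let λ > 0 and H₀ the distribution of (x, y). Define the ridge functional R(H) = (E_H[xx′] + 2λI_p)⁻¹·E_H[xy] and write β_R = R(H₀). Fix (x₀, y₀) and let H_ε = (1 − ε)H₀ + ε·δ_{(x₀,y₀)}. Then ε ↦ R(H_ε) is differentiable at 0 with derivative (E_{H₀}[xx′] + 2λI_p)⁻¹·((y₀ − x₀′β_R)·x₀ + E_{H₀}[xx′]·(β_R − β₀)). -/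
/-!
Along the contamination path every first and second moment is affine in `ε` on `[0, 1]`, so
`R(H_ε) = (M + ε N)⁻¹ (b + ε d)` with `M = E[xx'] + 2λI` positive definite. Differentiating
`(M + ε N) g(ε) = b + ε d` at `0` gives `g'(0) = M⁻¹ (d - N g(0))`, and the model identity
`E[xy] = E[xx'] β₀` (from `x ⊥ e` and `E[e] = 0`) turns this into the stated derivative.
-/

open MeasureTheory Matrix ProbabilityTheory Filter Topology

/-- `ENNReal.ofReal` truncates, so this is the mixture `(1 - ε) ν + ε δ_a` only for
`ε ∈ [0, 1]`. -/
noncomputable def contaminated {α : Type*} [MeasurableSpace α] (ν : Measure α) (a : α)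
    (ε : ℝ) : Measure α :=
  ENNReal.ofReal (1 - ε) • ν + ENNReal.ofReal ε • Measure.dirac a

theorem integral_contaminated {α E : Type*} [MeasurableSpace α] [MeasurableSingletonClass α]
    [NormedAddCommGroup E] [NormedSpace ℝ E] [CompleteSpace E] {ν : Measure α} {f : α → E}
    (hf : Integrable f ν) (a : α) {ε : ℝ} (hε₀ : 0 ≤ ε) (hε₁ : ε ≤ 1) :
    ∫ z, f z ∂contaminated ν a ε = (1 - ε) • ∫ z, f z ∂ν + ε • f a := by
  rw [contaminated, integral_add_measure (hf.smul_measure ENNReal.ofReal_ne_top)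
      ((integrable_dirac enorm_lt_top).smul_measure ENNReal.ofReal_ne_top),
    integral_smul_measure, integral_smul_measure, integral_dirac,
    ENNReal.toReal_ofReal (sub_nonneg.2 hε₁), ENNReal.toReal_ofReal hε₀]

section Moments

variable {n : Type*} [Fintype n] {ν : Measure ((n → ℝ) × ℝ)}

noncomputable def secondMomentMatrix (ν : Measure ((n → ℝ) × ℝ)) : Matrix n n ℝ :=
  Matrix.of fun i j => ∫ z, z.1 i * z.1 j ∂ν

noncomputable def crossMomentVector (ν : Measure ((n → ℝ) × ℝ)) : n → ℝ :=
  fun i => ∫ z, z.1 i * z.2 ∂ν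

theorem secondMomentMatrix_contaminated (hν : ∀ i j, Integrable (fun z => z.1 i * z.1 j) ν)
    (a : (n → ℝ) × ℝ) {ε : ℝ} (hε₀ : 0 ≤ ε) (hε₁ : ε ≤ 1) :
    secondMomentMatrix (contaminated ν a ε)
      = secondMomentMatrix ν + ε • (vecMulVec a.1 a.1 - secondMomentMatrix ν) := by
  ext i j
  simp only [secondMomentMatrix, of_apply, integral_contaminated (hν i j) a hε₀ hε₁,
    Matrix.add_apply, Matrix.smul_apply, Matrix.sub_apply, vecMulVec_apply, smul_eq_mul]
  ring

theorem crossMomentVector_contaminated (hν : ∀ i, Integrable (fun z => z.1 i * z.2) ν)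
    (a : (n → ℝ) × ℝ) {ε : ℝ} (hε₀ : 0 ≤ ε) (hε₁ : ε ≤ 1) :
    crossMomentVector (contaminated ν a ε)
      = crossMomentVector ν + ε • (a.2 • a.1 - crossMomentVector ν) := by
  ext i
  simp only [crossMomentVector, integral_contaminated (hν i) a hε₀ hε₁, Pi.add_apply,
    Pi.smul_apply, Pi.sub_apply, smul_eq_mul]
  ring

theorem integrable_fst_mul_dotProduct (hν : ∀ i j, Integrable (fun z => z.1 i * z.1 j) ν)
    (i : n) (v : n → ℝ) : Integrable (fun z => z.1 i * (z.1 ⬝ᵥ v)) ν := by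
  simp only [dotProduct, Finset.mul_sum, ← mul_assoc]
  exact integrable_finsetSum _ fun j _ => (hν i j).mul_const (v j)

theorem mulVec_secondMomentMatrix (hν : ∀ i j, Integrable (fun z => z.1 i * z.1 j) ν)
    (v : n → ℝ) (i : n) :
    (secondMomentMatrix ν *ᵥ v) i = ∫ z, z.1 i * (z.1 ⬝ᵥ v) ∂ν := by
  simp only [mulVec, dotProduct, secondMomentMatrix, of_apply, Finset.mul_sum, ← mul_assoc]
  rw [integral_finsetSum _ fun j _ => (hν i j).mul_const (v j)]
  simp only [integral_mul_const]

theorem dotProduct_secondMomentMatrix_mulVec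
    (hν : ∀ i j, Integrable (fun z => z.1 i * z.1 j) ν) (u v : n → ℝ) :
    u ⬝ᵥ secondMomentMatrix ν *ᵥ v = ∫ z, (u ⬝ᵥ z.1) * (z.1 ⬝ᵥ v) ∂ν := by
  calc u ⬝ᵥ secondMomentMatrix ν *ᵥ v
        = ∑ i, ∫ z, u i * (z.1 i * (z.1 ⬝ᵥ v)) ∂ν := by
        simp_rw [integral_const_mul, ← mulVec_secondMomentMatrix hν]
        rfl
    _ = ∫ z, ∑ i, u i * (z.1 i * (z.1 ⬝ᵥ v)) ∂ν :=
        (integral_finsetSum _ fun i _ =>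
          (integrable_fst_mul_dotProduct hν i v).const_mul (u i)).symm
    _ = ∫ z, (u ⬝ᵥ z.1) * (z.1 ⬝ᵥ v) ∂ν := by
        congr 1 with z
        rw [show u ⬝ᵥ z.1 = ∑ i, u i * z.1 i from rfl, Finset.sum_mul]
        simp only [mul_assoc]

theorem posSemidef_secondMomentMatrix (hν : ∀ i j, Integrable (fun z => z.1 i * z.1 j) ν) :
    (secondMomentMatrix ν).PosSemidef := by
  refine .of_dotProduct_mulVec_nonneg ?_ fun x => ?_
  · ext i j
    simp only [conjTranspose_apply, star_trivial, secondMomentMatrix, of_apply, mul_comm]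
  · rw [star_trivial, dotProduct_secondMomentMatrix_mulVec hν]
    refine integral_nonneg fun z => ?_
    rw [dotProduct_comm z.1]
    exact mul_self_nonneg _

theorem isUnit_secondMomentMatrix_add_smul_one [DecidableEq n]
    (hν : ∀ i j, Integrable (fun z => z.1 i * z.1 j) ν) {c : ℝ} (hc : 0 < c) :
    IsUnit (secondMomentMatrix ν + c • 1) :=
  (PosDef.posSemidef_add (posSemidef_secondMomentMatrix hν) (PosDef.one.smul hc)).isUnit

end Moments

section AffineInverse

variable {𝕜 n : Type*} [NontriviallyNormedField 𝕜] [Fintype n] [DecidableEq n]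
  {M N : Matrix n n 𝕜} (b d : n → 𝕜)

theorem inv_add_smul_mulVec_sub {ε : 𝕜} (hM : IsUnit M) (hMN : IsUnit (M + ε • N)) :
    (M + ε • N)⁻¹ *ᵥ (b + ε • d) - M⁻¹ *ᵥ b
      = ε • M⁻¹ *ᵥ (d - N *ᵥ ((M + ε • N)⁻¹ *ᵥ (b + ε • d))) := by
  set g := (M + ε • N)⁻¹ *ᵥ (b + ε • d)
  have hg : M *ᵥ g + ε • N *ᵥ g = b + ε • d := by
    rw [← smul_mulVec, ← add_mulVec, mulVec_mulVec,
      mul_nonsing_inv _ ((isUnit_iff_isUnit_det _).1 hMN), one_mulVec]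
  have hMinv : M⁻¹ *ᵥ (M *ᵥ g) = g := by
    rw [mulVec_mulVec, nonsing_inv_mul _ ((isUnit_iff_isUnit_det _).1 hM), one_mulVec]
  calc g - M⁻¹ *ᵥ b = M⁻¹ *ᵥ (M *ᵥ g - b) := by rw [mulVec_sub, hMinv]
    _ = M⁻¹ *ᵥ (ε • (d - N *ᵥ g)) := by congr 1; linear_combination (norm := module) hg
    _ = ε • M⁻¹ *ᵥ (d - N *ᵥ g) := by rw [mulVec_smul]

theorem continuousAt_inv_add_smul_mulVec (hM : IsUnit M) :
    ContinuousAt (fun ε : 𝕜 => (M + ε • N)⁻¹ *ᵥ (b + ε • d)) 0 := by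
  have hinv : ContinuousAt Inv.inv (M + (0 : 𝕜) • N) := by
    rw [zero_smul, add_zero]
    refine continuousAt_matrix_inv _ ?_
    rw [Ring.inverse_eq_inv']
    exact continuousAt_inv₀ ((isUnit_iff_isUnit_det _).1 hM).ne_zero
  have hmulVec : Continuous fun q : Matrix n n 𝕜 × (n → 𝕜) => q.1 *ᵥ q.2 :=
    continuous_fst.matrix_mulVec continuous_snd
  exact hmulVec.continuousAt.comp
    ((hinv.comp (f := fun ε : 𝕜 => M + ε • N) (by fun_prop)).prodMk (by fun_prop))

theorem hasDerivAt_inv_add_smul_mulVec (hM : IsUnit M) :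
    HasDerivAt (fun ε : 𝕜 => (M + ε • N)⁻¹ *ᵥ (b + ε • d))
      (M⁻¹ *ᵥ (d - N *ᵥ (M⁻¹ *ᵥ b))) 0 := by
  set g := fun ε : 𝕜 => (M + ε • N)⁻¹ *ᵥ (b + ε • d)
  have hg0 : g 0 = M⁻¹ *ᵥ b := by simp [g]
  have hunit : ∀ᶠ ε in 𝓝 (0 : 𝕜), IsUnit (M + ε • N) := by
    have hdet : ContinuousAt (fun ε : 𝕜 => (M + ε • N).det) 0 := by fun_prop
    have hne : (M + (0 : 𝕜) • N).det ≠ 0 := by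
      simpa using ((isUnit_iff_isUnit_det _).1 hM).ne_zero
    filter_upwards [hdet.eventually_ne hne] with ε hε
    exact (isUnit_iff_isUnit_det _).2 (isUnit_iff_ne_zero.2 hε)
  have hslope : slope g 0 =ᶠ[𝓝[≠] 0] fun ε => M⁻¹ *ᵥ (d - N *ᵥ g ε) := by
    filter_upwards [nhdsWithin_le_nhds hunit, self_mem_nhdsWithin] with ε hMN hε
    rw [slope_def_module, sub_zero, hg0, inv_add_smul_mulVec_sub b d hM hMN,
      inv_smul_smul₀ hε]
  rw [hasDerivAt_iff_tendsto_slope, tendsto_congr' hslope, ← hg0]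
  refine ContinuousAt.tendsto ?_ |>.mono_left nhdsWithin_le_nhds
  have hout : Continuous fun v => M⁻¹ *ᵥ (d - N *ᵥ v) :=
    continuous_const.matrix_mulVec
      (continuous_const.sub (continuous_const.matrix_mulVec continuous_id))
  exact hout.continuousAt.comp (continuousAt_inv_add_smul_mulVec b d hM)

end AffineInverse

section LinearModel

variable {n Ω : Type*} [Fintype n] [MeasurableSpace Ω] {μ : Measure Ω} {X : Ω → n → ℝ}
  {e : Ω → ℝ}

theorem measurable_linearModel (hXm : Measurable X) (hem : Measurable e) (β : n → ℝ) :
    Measurable fun ω => (X ω, X ω ⬝ᵥ β + e ω) := by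
  unfold dotProduct
  fun_prop

theorem integrable_fst_mul_fst_map_linearModel (hXm : Measurable X) (hem : Measurable e)
    (hXX : ∀ i j, Integrable (fun ω => X ω i * X ω j) μ) (β : n → ℝ) (i j : n) :
    Integrable (fun z => z.1 i * z.1 j) (μ.map fun ω => (X ω, X ω ⬝ᵥ β + e ω)) := by
  rw [integrable_map_measure (by fun_prop) (measurable_linearModel hXm hem β).aemeasurable]
  exact hXX i j

theorem integrable_fst_mul_snd_map_linearModel (hXm : Measurable X) (hem : Measurable e)
    (hXX : ∀ i j, Integrable (fun ω => X ω i * X ω j) μ)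
    (hXe : ∀ i, Integrable (fun ω => X ω i * e ω) μ) (β : n → ℝ) (i : n) :
    Integrable (fun z => z.1 i * z.2) (μ.map fun ω => (X ω, X ω ⬝ᵥ β + e ω)) := by
  rw [integrable_map_measure (by fun_prop) (measurable_linearModel hXm hem β).aemeasurable]
  simp only [Function.comp_def, mul_add, dotProduct, Finset.mul_sum, ← mul_assoc]
  exact (integrable_finsetSum _ fun j _ => (hXX i j).mul_const (β j)).add (hXe i)

theorem crossMomentVector_map_linearModel (hXm : Measurable X) (hem : Measurable e)
    (hind : IndepFun X e μ) (hXX : ∀ i j, Integrable (fun ω => X ω i * X ω j) μ)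
    (hXe : ∀ i, Integrable (fun ω => X ω i * e ω) μ) (hmean : ∫ ω, e ω ∂μ = 0)
    (β : n → ℝ) :
    crossMomentVector (μ.map fun ω => (X ω, X ω ⬝ᵥ β + e ω))
      = secondMomentMatrix (μ.map fun ω => (X ω, X ω ⬝ᵥ β + e ω)) *ᵥ β := by
  have hXX' := integrable_fst_mul_fst_map_linearModel hXm hem hXX β
  ext i
  have hXe0 : ∫ ω, X ω i * e ω ∂μ = 0 := by
    have h := (hind.comp (measurable_pi_apply i) measurable_id).integral_mul_eq_mul_integral
      (hXm.eval (a := i)).aestronglyMeasurable hem.aestronglyMeasurable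
    simpa [hmean] using h
  rw [← sub_eq_zero, mulVec_secondMomentMatrix hXX', crossMomentVector,
    ← integral_sub (integrable_fst_mul_snd_map_linearModel hXm hem hXX hXe β i)
      (integrable_fst_mul_dotProduct hXX' i β)]
  simp_rw [← mul_sub]
  rw [integral_map (measurable_linearModel hXm hem β).aemeasurable (by fun_prop)]
  simpa using hXe0

end LinearModel

theorem influence_function_ridge_general
    {p : ℕ} {Ω : Type*} [MeasurableSpace Ω] (μ : Measure Ω)
    (X : Ω → (Fin p → ℝ)) (e : Ω → ℝ) (hXm : Measurable X) (hem : Measurable e)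
    (hind : IndepFun X e μ)
    (hXX : ∀ i j, Integrable (fun ω => X ω i * X ω j) μ)
    (hXe : ∀ i, Integrable (fun ω => X ω i * e ω) μ)
    (hmean : ∫ ω, e ω ∂μ = 0)
    (β₀ : Fin p → ℝ)
    (H₀ : Measure ((Fin p → ℝ) × ℝ))
    (hH₀ : H₀ = μ.map (fun ω => (X ω, X ω ⬝ᵥ β₀ + e ω)))
    (lam : ℝ) (hlam : 0 < lam)
    (R : Measure ((Fin p → ℝ) × ℝ) → (Fin p → ℝ))
    (hR : ∀ ν : Measure ((Fin p → ℝ) × ℝ),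
      R ν = (Matrix.of (fun i j => ∫ z, z.1 i * z.1 j ∂ν)
          + (2 * lam) • (1 : Matrix (Fin p) (Fin p) ℝ))⁻¹.mulVec
        (fun i => ∫ z, z.1 i * z.2 ∂ν))
    (x₀ : Fin p → ℝ) (y₀ : ℝ)
    (βR : Fin p → ℝ) (hβR : βR = R H₀) :
    HasDerivWithinAt
      (fun ε : ℝ =>
        R (ENNReal.ofReal (1 - ε) • H₀ + ENNReal.ofReal ε • Measure.dirac (x₀, y₀)))
      ((Matrix.of (fun i j => ∫ z, z.1 i * z.1 j ∂H₀)
          + (2 * lam) • (1 : Matrix (Fin p) (Fin p) ℝ))⁻¹.mulVec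
        (fun i => (y₀ - x₀ ⬝ᵥ βR) * x₀ i
          + (Matrix.of (fun i j => ∫ z, z.1 i * z.1 j ∂H₀)).mulVec (βR - β₀) i))
      (Set.Ici 0) 0 := by
  have hR' : ∀ ν, R ν
      = (secondMomentMatrix ν + (2 * lam) • 1)⁻¹ *ᵥ crossMomentVector ν := hR
  show HasDerivWithinAt (fun ε => R (contaminated H₀ (x₀, y₀) ε))
    ((secondMomentMatrix H₀ + (2 * lam) • 1)⁻¹
      *ᵥ ((y₀ - x₀ ⬝ᵥ βR) • x₀ + secondMomentMatrix H₀ *ᵥ (βR - β₀)))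
    (Set.Ici 0) 0
  have hXXH := hH₀ ▸ integrable_fst_mul_fst_map_linearModel hXm hem hXX β₀
  have hXYH := hH₀ ▸ integrable_fst_mul_snd_map_linearModel hXm hem hXX hXe β₀
  have hb := hH₀ ▸ crossMomentVector_map_linearModel hXm hem hind hXX hXe hmean β₀
  set A := secondMomentMatrix H₀
  set b := crossMomentVector H₀
  set M := A + (2 * lam) • (1 : Matrix (Fin p) (Fin p) ℝ)
  have hM : IsUnit M := isUnit_secondMomentMatrix_add_smul_one hXXH (by positivity)
  have hpath : ∀ ε ∈ Set.Icc (0 : ℝ) 1, R (contaminated H₀ (x₀, y₀) ε)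
      = (M + ε • (vecMulVec x₀ x₀ - A))⁻¹ *ᵥ (b + ε • (y₀ • x₀ - b)) := by
    rintro ε ⟨hε₀, hε₁⟩
    rw [hR', secondMomentMatrix_contaminated hXXH _ hε₀ hε₁,
      crossMomentVector_contaminated hXYH _ hε₀ hε₁, add_right_comm]
  have hvalue : (y₀ - x₀ ⬝ᵥ βR) • x₀ + A *ᵥ (βR - β₀)
      = (y₀ • x₀ - b) - (vecMulVec x₀ x₀ - A) *ᵥ (M⁻¹ *ᵥ b) := by
    rw [← hR', ← hβR, hb, sub_mulVec, vecMulVec_mulVec, mulVec_sub, op_smul_eq_smul]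
    module
  rw [hvalue]
  exact (hasDerivAt_inv_add_smul_mulVec b _ hM).hasDerivWithinAt.congr_of_eventuallyEq
    (eventually_of_mem (Icc_mem_nhdsGE one_pos) hpath) (hpath 0 ⟨le_rfl, zero_le_one⟩)

/-- Influence function of the ridge functional. Under the model
`y = x'β₀ + e` with `x ⊥ e` and `E[e] = 0`, the map `ε ↦ R(H_ε)` with
`H_ε = (1-ε)H₀ + ε·δ_{(x₀,y₀)}` and `R(H) = (E_H[xx'] + 2λI)⁻¹E_H[xy]` is
differentiable at `0` with derivative
`(E_{H₀}[xx'] + 2λI)⁻¹·((y₀ - x₀'β_R)x₀ + E_{H₀}[xx']·(β_R - β₀))`. -/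
theorem influence_function_ridge
    {p : ℕ} {Ω : Type*} [MeasurableSpace Ω] (μ : Measure Ω) [IsProbabilityMeasure μ]
    (X : Ω → (Fin p → ℝ)) (e : Ω → ℝ) (hXm : Measurable X) (hem : Measurable e)
    (hind : IndepFun X e μ)
    (hX1 : ∀ i, Integrable (fun ω => X ω i) μ) (he1 : Integrable e μ)
    (hXX : ∀ i j, Integrable (fun ω => X ω i * X ω j) μ)
    (hXe : ∀ i, Integrable (fun ω => X ω i * e ω) μ)
    (he2 : Integrable (fun ω => (e ω) ^ 2) μ)
    (hmean : ∫ ω, e ω ∂μ = 0)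
    (β₀ : Fin p → ℝ)
    (H₀ : Measure ((Fin p → ℝ) × ℝ))
    (hH₀ : H₀ = μ.map (fun ω => (X ω, X ω ⬝ᵥ β₀ + e ω)))
    (lam : ℝ) (hlam : 0 < lam)
    (R : Measure ((Fin p → ℝ) × ℝ) → (Fin p → ℝ))
    (hR : ∀ ν : Measure ((Fin p → ℝ) × ℝ),
      R ν = (Matrix.of (fun i j => ∫ z, z.1 i * z.1 j ∂ν)
          + (2 * lam) • (1 : Matrix (Fin p) (Fin p) ℝ))⁻¹.mulVec
        (fun i => ∫ z, z.1 i * z.2 ∂ν))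
    (x₀ : Fin p → ℝ) (y₀ : ℝ)
    (βR : Fin p → ℝ) (hβR : βR = R H₀) :
    HasDerivWithinAt
      (fun ε : ℝ =>
        R (ENNReal.ofReal (1 - ε) • H₀ + ENNReal.ofReal ε • Measure.dirac (x₀, y₀)))
      ((Matrix.of (fun i j => ∫ z, z.1 i * z.1 j ∂H₀)
          + (2 * lam) • (1 : Matrix (Fin p) (Fin p) ℝ))⁻¹.mulVec
        (fun i => (y₀ - x₀ ⬝ᵥ βR) * x₀ i
          + (Matrix.of (fun i j => ∫ z, z.1 i * z.1 j ∂H₀)).mulVec (βR - β₀) i))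
      (Set.Ici 0) 0 :=
  influence_function_ridge_general μ X e hXm hem hind hXX hXe hmean β₀ H₀ hH₀ lam hlam R hR x₀ y₀ βR
    hβR
end

section
/- Let y = x′β₀ + e be a regression model in ℝᵖ with finite second moments, λ ≥ 0, fix (x₀, y₀) and let H_ε = (1 − ε)H₀ + ε·δ_{(x₀,y₀)}. Suppose b : [0, δ) → ℝᵖ is differentiable at 0, its value b(0) has b_j(0) ≠ 0 for j = 1,…,k and b_j(0) = 0 for j = k+1,…,p, and for all ε in a right-neighborhood of 0: (a) b_j(ε) = 0 for all j > k, (b) sign(b_j(ε)) = sign(b_j(0)) for all j ≤ k, and (c) for each j ≤ k the first-order condition E_{H_ε}[x_j·(y − x′b(ε))] = λ·sign(b_j(ε)) holds. If E_{H₀}[x_{1:k}x_{1:k}′] is invertible, then b′(0) has last p − k coordinates equal to 0 and first k coordinates equal to (E_{H₀}[x_{1:k}x_{1:k}′])⁻¹·((x₀)_{1:k}·(y₀ − x₀′b(0)) − E_{H₀}[x_{1:k}·(y − x′b(0))]). -/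
open MeasureTheory ProbabilityTheory Matrix Filter

/-!
Along the curve `ε ↦ b ε` the inactive coordinates vanish identically, so their derivatives
vanish, and the signs of the active coordinates are frozen, so the first-order conditions say that
the contaminated score `(1 - ε) E_{H₀}[x_j (y - x'b(ε))] + ε x₀ⱼ (y₀ - x₀'b(ε))` is locally
constant for every active `j`. The score under `H₀` is affine in `b`, with linear part minus the
Gram matrix `E_{H₀}[x x']`; differentiating at `ε = 0` gives
`(E_{H₀}[x x'] b'(0))ⱼ = x₀ⱼ (y₀ - x₀'b(0)) - E_{H₀}[x_j (y - x'b(0))]` for active `j`. Since `b'(0)`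
is supported on the active set, the left side only involves the active block of the Gram matrix,
which is inverted.
-/

theorem HasDerivWithinAt.eq_zero_of_eventuallyEq_const {F : Type*} [NormedAddCommGroup F]
    [NormedSpace ℝ F] {f : ℝ → F} {f' : F} {s : Set ℝ}
    {x : ℝ} {c : F} (hf : HasDerivWithinAt f f' s x) (hs : UniqueDiffWithinAt ℝ s x)
    (hx : x ∈ s) (hc : f =ᶠ[nhdsWithin x s] fun _ => c) : f' = 0 :=
  hs.eq_deriv _ hf <|
    (hasDerivWithinAt_const x s c).congr_of_eventuallyEq hc (hc.self_of_nhdsWithin hx)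

theorem HasDerivWithinAt.const_dotProduct {ι : Type*} [Fintype ι] {b : ℝ → ι → ℝ}
    {D : ι → ℝ} {s : Set ℝ} {x : ℝ} (hb : HasDerivWithinAt b D s x) (a : ι → ℝ) :
    HasDerivWithinAt (fun ε => a ⬝ᵥ b ε) (a ⬝ᵥ D) s x :=
  HasDerivWithinAt.fun_sum fun l _ => (hasDerivWithinAt_pi.mp hb l).const_mul (a l)

theorem HasDerivWithinAt.one_sub_mul_add_mul {f g : ℝ → ℝ} {f' g' : ℝ} {s : Set ℝ}
    (hf : HasDerivWithinAt f f' s 0) (hg : HasDerivWithinAt g g' s 0) :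
    HasDerivWithinAt (fun ε => (1 - ε) * f ε + ε * g ε) (f' + g 0 - f 0) s 0 := by
  have hid : HasDerivWithinAt (fun ε : ℝ => ε) 1 s 0 := hasDerivWithinAt_id 0 s
  refine (((hid.const_sub 1).fun_mul hf).fun_add (hid.fun_mul hg)).congr_deriv ?_
  ring

theorem integral_contamination {α : Type*} [MeasurableSpace α] [MeasurableSingletonClass α]
    {H : Measure α} {f : α → ℝ} (hf : Integrable f H) (a : α) {ε : ℝ} (h₀ : 0 ≤ ε)
    (h₁ : ε ≤ 1) :
    ∫ z, f z ∂(ENNReal.ofReal (1 - ε) • H + ENNReal.ofReal ε • Measure.dirac a) =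
      (1 - ε) * ∫ z, f z ∂H + ε * f a := by
  rw [integral_add_measure (hf.smul_measure ENNReal.ofReal_ne_top)
      ((integrable_dirac enorm_lt_top).smul_measure ENNReal.ofReal_ne_top),
    integral_smul_measure, integral_smul_measure, integral_dirac,
    ENNReal.toReal_ofReal (by linarith), ENNReal.toReal_ofReal h₀, smul_eq_mul, smul_eq_mul]

theorem Matrix.submatrix_mulVec_comp_castLE {R : Type*} [NonUnitalNonAssocSemiring R]
    {k p : ℕ} (hk : k ≤ p) (M : Matrix (Fin p) (Fin p) R) {v : Fin p → R}
    (hv : ∀ j : Fin p, k ≤ (j : ℕ) → v j = 0) :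
    M.submatrix (Fin.castLE hk) (Fin.castLE hk) *ᵥ (v ∘ Fin.castLE hk) =
      (M *ᵥ v) ∘ Fin.castLE hk := by
  funext i
  refine Fintype.sum_of_injective (Fin.castLE hk) (Fin.castLE_injective hk) _ _
    (fun j hj => ?_) fun _ => rfl
  have hkj : k ≤ (j : ℕ) := by
    by_contra! hjk
    exact hj ⟨⟨j, hjk⟩, rfl⟩
  simp [hv j hkj]

namespace Lasso

variable {ι : Type*} [Fintype ι]

/-- The left sides of the lasso first-order conditions. -/
noncomputable def score (H : Measure ((ι → ℝ) × ℝ)) (v : ι → ℝ) (j : ι) : ℝ :=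
  ∫ z, z.1 j * (z.2 - z.1 ⬝ᵥ v) ∂H

noncomputable def gram (H : Measure ((ι → ℝ) × ℝ)) : Matrix ι ι ℝ :=
  fun i l => ∫ z, z.1 i * z.1 l ∂H

theorem integrable_mul_sub_dotProduct {H : Measure ((ι → ℝ) × ℝ)} {j : ι}
    (hxx : ∀ l, Integrable (fun z : (ι → ℝ) × ℝ => z.1 j * z.1 l) H)
    (hxy : Integrable (fun z : (ι → ℝ) × ℝ => z.1 j * z.2) H) (v : ι → ℝ) :
    Integrable (fun z : (ι → ℝ) × ℝ => z.1 j * (z.2 - z.1 ⬝ᵥ v)) H := by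
  simp_rw [mul_sub, dotProduct, Finset.mul_sum, ← mul_assoc]
  exact hxy.sub (integrable_finsetSum _ fun l _ => (hxx l).mul_const (v l))

theorem score_eq {H : Measure ((ι → ℝ) × ℝ)} {j : ι}
    (hxx : ∀ l, Integrable (fun z : (ι → ℝ) × ℝ => z.1 j * z.1 l) H)
    (hxy : Integrable (fun z : (ι → ℝ) × ℝ => z.1 j * z.2) H) (v : ι → ℝ) :
    score H v j = ∫ z, z.1 j * z.2 ∂H - (gram H *ᵥ v) j := by
  simp_rw [score, mul_sub, dotProduct, Finset.mul_sum, ← mul_assoc]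
  rw [integral_sub hxy (integrable_finsetSum _ fun l _ => (hxx l).mul_const (v l)),
    integral_finsetSum _ fun l _ => (hxx l).mul_const (v l)]
  simp only [integral_mul_const, mulVec, dotProduct, gram]

theorem score_contamination {H : Measure ((ι → ℝ) × ℝ)} {j : ι}
    (hxx : ∀ l, Integrable (fun z : (ι → ℝ) × ℝ => z.1 j * z.1 l) H)
    (hxy : Integrable (fun z : (ι → ℝ) × ℝ => z.1 j * z.2) H) (v x₀ : ι → ℝ) (y₀ : ℝ) {ε : ℝ}
    (h₀ : 0 ≤ ε) (h₁ : ε ≤ 1) :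
    score (ENNReal.ofReal (1 - ε) • H + ENNReal.ofReal ε • Measure.dirac (x₀, y₀)) v j =
      (1 - ε) * score H v j + ε * (x₀ j * (y₀ - x₀ ⬝ᵥ v)) :=
  integral_contamination (integrable_mul_sub_dotProduct hxx hxy v) _ h₀ h₁

theorem gram_mulVec_deriv_eq_of_eventually_const {H : Measure ((ι → ℝ) × ℝ)} {j : ι}
    (hxx : ∀ l, Integrable (fun z : (ι → ℝ) × ℝ => z.1 j * z.1 l) H)
    (hxy : Integrable (fun z : (ι → ℝ) × ℝ => z.1 j * z.2) H) {x₀ : ι → ℝ} {y₀ : ℝ}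
    {s : Set ℝ} (hs : UniqueDiffWithinAt ℝ s 0) (h0s : 0 ∈ s) {b : ℝ → ι → ℝ} {D : ι → ℝ}
    (hb : HasDerivWithinAt b D s 0) {c : ℝ}
    (hc : ∀ᶠ ε in nhdsWithin 0 s,
      (1 - ε) * score H (b ε) j + ε * (x₀ j * (y₀ - x₀ ⬝ᵥ b ε)) = c) :
    (gram H *ᵥ D) j = x₀ j * (y₀ - x₀ ⬝ᵥ b 0) - score H (b 0) j := by
  have hscore : HasDerivWithinAt (fun ε => score H (b ε) j) (-(gram H *ᵥ D) j) s 0 := by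
    simp_rw [score_eq hxx hxy]
    exact (hb.const_dotProduct (gram H j)).const_sub _
  have hψ := ((hb.const_dotProduct x₀).const_sub y₀).const_mul (x₀ j)
  have := (hscore.one_sub_mul_add_mul hψ).eq_zero_of_eventuallyEq_const hs h0s hc
  linarith

end Lasso

open Lasso in
theorem influence_function_lasso_multiple_general
    {p : ℕ}
    (H₀ : Measure ((Fin p → ℝ) × ℝ))
    (hxx : ∀ i i' : Fin p, Integrable (fun z : (Fin p → ℝ) × ℝ => z.1 i * z.1 i') H₀)
    (hxy : ∀ i : Fin p, Integrable (fun z : (Fin p → ℝ) × ℝ => z.1 i * z.2) H₀)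
    (lam : ℝ)
    (x₀ : Fin p → ℝ) (y₀ : ℝ)
    (Hmix : ℝ → Measure ((Fin p → ℝ) × ℝ))
    (hHmix : ∀ ε : ℝ,
      Hmix ε = ENNReal.ofReal (1 - ε) • H₀ + ENNReal.ofReal ε • Measure.dirac (x₀, y₀))
    (k : ℕ) (hk : k ≤ p)
    (b : ℝ → (Fin p → ℝ)) (D : Fin p → ℝ)
    (hb : HasDerivWithinAt b D (Set.Ici 0) 0)
    (hloc : ∀ᶠ ε in nhdsWithin (0 : ℝ) (Set.Ici 0),
      (∀ j : Fin p, k ≤ (j : ℕ) → b ε j = 0) ∧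
      (∀ j : Fin p, (j : ℕ) < k → Real.sign (b ε j) = Real.sign (b 0 j)) ∧
      (∀ j : Fin p, (j : ℕ) < k →
        (∫ z, z.1 j * (z.2 - z.1 ⬝ᵥ b ε) ∂(Hmix ε)) = lam * Real.sign (b ε j)))
    (A : Matrix (Fin k) (Fin k) ℝ)
    (hA : ∀ i i' : Fin k, A i i' = ∫ z, z.1 (Fin.castLE hk i) * z.1 (Fin.castLE hk i') ∂H₀)
    (hAinv : IsUnit A.det) :
    (∀ j : Fin p, k ≤ (j : ℕ) → D j = 0) ∧
      (fun i : Fin k => D (Fin.castLE hk i)) =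
        A⁻¹.mulVec (fun i : Fin k =>
          x₀ (Fin.castLE hk i) * (y₀ - x₀ ⬝ᵥ b 0)
            - ∫ z, z.1 (Fin.castLE hk i) * (z.2 - z.1 ⬝ᵥ b 0) ∂H₀) := by
  have hUD : UniqueDiffWithinAt ℝ (Set.Ici (0 : ℝ)) 0 := uniqueDiffOn_Ici 0 0 Set.self_mem_Ici
  have inactive : ∀ j : Fin p, k ≤ (j : ℕ) → D j = 0 := fun j hj =>
    (hasDerivWithinAt_pi.mp hb j).eq_zero_of_eventuallyEq_const hUD Set.self_mem_Ici
      (hloc.mono fun ε hε => hε.1 j hj)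
  have active : ∀ j : Fin p, (j : ℕ) < k →
      (gram H₀ *ᵥ D) j = x₀ j * (y₀ - x₀ ⬝ᵥ b 0) - score H₀ (b 0) j := fun j hj =>
    gram_mulVec_deriv_eq_of_eventually_const (hxx j) (hxy j) hUD Set.self_mem_Ici hb
      (c := lam * Real.sign (b 0 j)) <| by
      filter_upwards [hloc, nhdsWithin_le_nhds (Iio_mem_nhds one_pos), self_mem_nhdsWithin]
        with ε hε hε₁ hε₀
      rw [← score_contamination (hxx j) (hxy j) _ _ _ hε₀ hε₁.le, ← hHmix, ← hε.2.1 j hj]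
      exact hε.2.2 j hj
  have hAgram : A = (gram H₀).submatrix (Fin.castLE hk) (Fin.castLE hk) := Matrix.ext hA
  refine ⟨inactive, ?_⟩
  let := A.invertibleOfIsUnitDet hAinv
  refine (inv_mulVec_eq_vec ?_).symm
  rw [hAgram]
  exact (funext fun i => (active _ i.2).symm).trans
    (submatrix_mulVec_comp_castLE hk _ inactive).symm

/-- Proposition 2 of the paper: influence function of the multiple
lasso functional. If `b(ε)` has locally stable active set `{1,…,k}` and signs, and
satisfies the first-order conditions on the active set under the contaminated
distribution `H_ε = (1-ε)H₀ + ε·δ_{(x₀,y₀)}`, and `E_{H₀}[x_{1:k}x_{1:k}']` is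
invertible, then `b'(0)` vanishes on the last `p - k` coordinates and its first `k`
coordinates equal
`(E_{H₀}[x_{1:k}x_{1:k}'])⁻¹·((x₀)_{1:k}(y₀ - x₀'b(0)) - E_{H₀}[x_{1:k}(y - x'b(0))])`. -/
theorem influence_function_lasso_multiple
    {p : ℕ} {Ω : Type*} [MeasurableSpace Ω] (μ : Measure Ω) [IsProbabilityMeasure μ]
    (X : Ω → (Fin p → ℝ)) (e : Ω → ℝ) (hXm : Measurable X) (hem : Measurable e)
    (hind : IndepFun X e μ)
    (β₀ : Fin p → ℝ)
    (H₀ : Measure ((Fin p → ℝ) × ℝ))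
    (hH₀ : H₀ = μ.map (fun ω => (X ω, X ω ⬝ᵥ β₀ + e ω)))
    (hxx : ∀ i i' : Fin p, Integrable (fun z : (Fin p → ℝ) × ℝ => z.1 i * z.1 i') H₀)
    (hxy : ∀ i : Fin p, Integrable (fun z : (Fin p → ℝ) × ℝ => z.1 i * z.2) H₀)
    (hy2 : Integrable (fun z : (Fin p → ℝ) × ℝ => z.2 ^ 2) H₀)
    (lam : ℝ) (hlam : 0 ≤ lam)
    (x₀ : Fin p → ℝ) (y₀ : ℝ)
    (Hmix : ℝ → Measure ((Fin p → ℝ) × ℝ))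
    (hHmix : ∀ ε : ℝ,
      Hmix ε = ENNReal.ofReal (1 - ε) • H₀ + ENNReal.ofReal ε • Measure.dirac (x₀, y₀))
    (k : ℕ) (hk : k ≤ p)
    (b : ℝ → (Fin p → ℝ)) (D : Fin p → ℝ)
    (hb : HasDerivWithinAt b D (Set.Ici 0) 0)
    (hnz : ∀ j : Fin p, (j : ℕ) < k → b 0 j ≠ 0)
    (hz : ∀ j : Fin p, k ≤ (j : ℕ) → b 0 j = 0)
    (hloc : ∀ᶠ ε in nhdsWithin (0 : ℝ) (Set.Ici 0),
      (∀ j : Fin p, k ≤ (j : ℕ) → b ε j = 0) ∧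
      (∀ j : Fin p, (j : ℕ) < k → Real.sign (b ε j) = Real.sign (b 0 j)) ∧
      (∀ j : Fin p, (j : ℕ) < k →
        (∫ z, z.1 j * (z.2 - z.1 ⬝ᵥ b ε) ∂(Hmix ε)) = lam * Real.sign (b ε j)))
    (A : Matrix (Fin k) (Fin k) ℝ)
    (hA : ∀ i i' : Fin k, A i i' = ∫ z, z.1 (Fin.castLE hk i) * z.1 (Fin.castLE hk i') ∂H₀)
    (hAinv : IsUnit A.det) :
    (∀ j : Fin p, k ≤ (j : ℕ) → D j = 0) ∧
      (fun i : Fin k => D (Fin.castLE hk i)) =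
        A⁻¹.mulVec (fun i : Fin k =>
          x₀ (Fin.castLE hk i) * (y₀ - x₀ ⬝ᵥ b 0)
            - ∫ z, z.1 (Fin.castLE hk i) * (z.2 - z.1 ⬝ᵥ b 0) ∂H₀) :=
  influence_function_lasso_multiple_general H₀ hxx hxy lam x₀ y₀ Hmix hHmix k hk b D hb hloc A hA
    hAinv
end

section
/- Let M ∈ ℝ^{p×p} be symmetric positive definite with block partition M = [[E₁₁, E₁₂], [E₂₁, E₂₂]] where E₁₁ is k × k (0 ≤ k < p), and let P = diag(0,…,0, 1,…,1) be the diagonal matrix with k zeros followed by p − k ones. Then, as K → ∞, (M + K·P)⁻¹ converges to the block matrix [[E₁₁⁻¹, 0], [0, 0]]. -/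
/-!
Rescale the second block row by `ε = K⁻¹`: for `K ≠ 0`,
`(M + K P)⁻¹ = (F_ε (M + K P))⁻¹ F_ε` with `F_ε = diag(1, ε)`, and
`F_ε (M + K P) = [[E₁₁, E₁₂], [ε E₂₁, ε E₂₂ + 1]]` depends continuously on `ε` and is
invertible at `ε = 0` as soon as `E₁₁` is. Letting `ε → 0`, the inverse tends to
`[[E₁₁, E₁₂], [0, 1]]⁻¹ · diag(1, 0) = [[E₁₁⁻¹, 0], [0, 0]]`.
-/

open Matrix Filter Topology

namespace Matrix

variable {𝕜 n m : Type*} [DecidableEq n] [DecidableEq m]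

theorem add_smul_diagonal_elim_zero_one [Semiring 𝕜] (M : Matrix (n ⊕ m) (n ⊕ m) 𝕜) (K : 𝕜) :
    M + K • diagonal (Sum.elim (0 : n → 𝕜) 1) =
      fromBlocks M.toBlocks₁₁ M.toBlocks₁₂ M.toBlocks₂₁ (M.toBlocks₂₂ + K • 1) := by
  conv_lhs => rw [← fromBlocks_toBlocks M, ← fromBlocks_diagonal]
  simp [fromBlocks_smul, fromBlocks_add]

variable [Fintype n] [Fintype m]

section Field

variable [Field 𝕜]

theorem fromBlocks_one_smul_one_mul_fromBlocks_add_inv_smul_one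
    (A : Matrix n n 𝕜) (B : Matrix n m 𝕜) (C : Matrix m n 𝕜) (D : Matrix m m 𝕜)
    {ε : 𝕜} (hε : ε ≠ 0) :
    fromBlocks 1 0 0 (ε • 1) * fromBlocks A B C (D + ε⁻¹ • 1) =
      fromBlocks A B (ε • C) (ε • D + 1) := by
  simp [fromBlocks_multiply, smul_add, smul_smul, hε]

theorem inv_fromBlocks_add_inv_smul_one
    (A : Matrix n n 𝕜) (B : Matrix n m 𝕜) (C : Matrix m n 𝕜) (D : Matrix m m 𝕜)
    {ε : 𝕜} (hε : ε ≠ 0) :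
    (fromBlocks A B C (D + ε⁻¹ • 1))⁻¹ =
      (fromBlocks A B (ε • C) (ε • D + 1))⁻¹ * fromBlocks 1 0 0 (ε • 1) := by
  have hF : IsUnit (fromBlocks (1 : Matrix n n 𝕜) 0 0 (ε • (1 : Matrix m m 𝕜))).det := by
    simp [det_fromBlocks_zero₂₁, hε]
  rw [← fromBlocks_one_smul_one_mul_fromBlocks_add_inv_smul_one A B C D hε, mul_inv_rev,
    nonsing_inv_mul_cancel_right _ _ hF]

theorem inv_fromBlocks_zero₂₁_one_mul_fromBlocks_one
    {A : Matrix n n 𝕜} (hA : IsUnit A.det) (B : Matrix n m 𝕜) :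
    (fromBlocks A B 0 1)⁻¹ * fromBlocks 1 0 0 0 = fromBlocks A⁻¹ 0 0 (0 : Matrix m m 𝕜) := by
  have hQ : IsUnit (fromBlocks A B 0 (1 : Matrix m m 𝕜)).det := by
    simpa [det_fromBlocks_zero₂₁] using hA
  have hA' : A * A⁻¹ = 1 := mul_nonsing_inv A hA
  rw [← nonsing_inv_mul_cancel_left _ (fromBlocks A⁻¹ 0 0 (0 : Matrix m m 𝕜)) hQ,
    fromBlocks_multiply]
  simp [hA']

end Field

theorem tendsto_inv_fromBlocks_add_inv_smul_one [NormedField 𝕜]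
    {A : Matrix n n 𝕜} (hA : IsUnit A.det) (B : Matrix n m 𝕜) (C : Matrix m n 𝕜)
    (D : Matrix m m 𝕜) :
    Tendsto (fun ε : 𝕜 => (fromBlocks A B C (D + ε⁻¹ • 1))⁻¹) (𝓝[≠] 0)
      (𝓝 (fromBlocks A⁻¹ 0 0 0)) := by
  set G : 𝕜 → Matrix (n ⊕ m) (n ⊕ m) 𝕜 := fun ε => fromBlocks A B (ε • C) (ε • D + 1)
  have hG : Continuous G := by fun_prop
  have hG0 : IsUnit (G 0).det := by simpa [G, det_fromBlocks_zero₂₁] using hA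
  have hdet : ContinuousAt Ring.inverse (G 0).det := by
    rw [Ring.inverse_eq_inv']
    exact continuousAt_inv₀ hG0.ne_zero
  have hGinv : ContinuousAt (fun ε => (G ε)⁻¹) 0 :=
    (continuousAt_matrix_inv _ hdet).comp hG.continuousAt
  have hlim : ContinuousAt (fun ε => (G ε)⁻¹ * fromBlocks 1 0 0 (ε • (1 : Matrix m m 𝕜))) 0 :=
    hGinv.mul (by fun_prop)
  have hval : (G 0)⁻¹ * fromBlocks 1 0 0 ((0 : 𝕜) • (1 : Matrix m m 𝕜)) =
      fromBlocks A⁻¹ 0 0 0 := by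
    simpa [G] using inv_fromBlocks_zero₂₁_one_mul_fromBlocks_one hA B
  rw [ContinuousAt, hval] at hlim
  refine (hlim.mono_left nhdsWithin_le_nhds).congr' ?_
  filter_upwards [self_mem_nhdsWithin] with ε hε
  exact (inv_fromBlocks_add_inv_smul_one A B C D hε).symm

theorem tendsto_inv_fromBlocks_add_smul_one_atTop
    {A : Matrix n n ℝ} (hA : IsUnit A.det) (B : Matrix n m ℝ) (C : Matrix m n ℝ)
    (D : Matrix m m ℝ) :
    Tendsto (fun K : ℝ => (fromBlocks A B C (D + K • 1))⁻¹) atTop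
      (𝓝 (fromBlocks A⁻¹ 0 0 0)) := by
  have hinv : Tendsto (fun K : ℝ => K⁻¹) atTop (𝓝[≠] 0) :=
    tendsto_inv_atTop_nhdsGT_zero.mono_right (nhdsWithin_mono _ fun _ h => ne_of_gt h)
  simpa only [Function.comp_def, inv_inv] using
    (tendsto_inv_fromBlocks_add_inv_smul_one hA B C D).comp hinv

end Matrix

theorem inverse_limit_penalized_block_matrix_general
    {k m : ℕ}
    (M : Matrix (Fin k ⊕ Fin m) (Fin k ⊕ Fin m) ℝ) (hM : M.PosDef) :
    Tendsto
      (fun K : ℝ =>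
        (M + K • Matrix.diagonal (Sum.elim (0 : Fin k → ℝ) (1 : Fin m → ℝ)))⁻¹)
      atTop
      (nhds (Matrix.fromBlocks (M.toBlocks₁₁)⁻¹ 0 0 0)) := by
  have hE₁₁ : IsUnit M.toBlocks₁₁.det :=
    (isUnit_iff_isUnit_det _).mp (hM.submatrix Sum.inl_injective).isUnit
  simpa only [add_smul_diagonal_elim_zero_one] using
    tendsto_inv_fromBlocks_add_smul_one_atTop hE₁₁ M.toBlocks₁₂ M.toBlocks₂₁ M.toBlocks₂₂

/-- key matrix limit for the lasso as a limit of smoothly penalized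
M-estimators. For a symmetric positive definite matrix `M` with block partition
`[[E₁₁, E₁₂], [E₂₁, E₂₂]]` (top-left block of size `k`) and `P` the diagonal matrix
with `k` zeros followed by `p - k` ones, `(M + K·P)⁻¹` converges, as `K → ∞`, to the
block matrix `[[E₁₁⁻¹, 0], [0, 0]]`. -/
theorem inverse_limit_penalized_block_matrix
    {k m : ℕ} (hm : 0 < m)
    (M : Matrix (Fin k ⊕ Fin m) (Fin k ⊕ Fin m) ℝ) (hM : M.PosDef) :
    Tendsto
      (fun K : ℝ =>
        (M + K • Matrix.diagonal (Sum.elim (0 : Fin k → ℝ) (1 : Fin m → ℝ)))⁻¹)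
      atTop
      (nhds (Matrix.fromBlocks (M.toBlocks₁₁)⁻¹ 0 0 0)) :=
  inverse_limit_penalized_block_matrix_general M hM
end
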